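/- arXiv:2312.08691 — 2 statements merged into one kernel-verified Lean document; each statement's English description precedes it below -/
import Mathlib

section
/- Let A = (a_{ij}) be an n×n real matrix such that D(A) belongs to the class 𝒟, D(A) is strongly connected, and Δ_A ≠ 0. Then the group inverse A^# = (α_{ij}) exists and α_{ij} = μ_{ij}/Δ_A for all i, j. -/
open Matrix

/-- Adjacency in a digraph given by relation `G`: a 2-cycle between distinct `i` and `j`. -/
def Adjd {n : ℕ} (G : Fin n → Fin n → Prop) (i j : Fin n) : Prop :=
  i ≠ j ∧ G i j ∧ G j i

/-- `G` is a simple symmetric digraph: no loops and edges come in both directions. -/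
def IsSSD {n : ℕ} (G : Fin n → Fin n → Prop) : Prop :=
  (∀ i, ¬ G i i) ∧ ∀ i j, G i j → G j i

/-- A vertex is pendant if it is incident to exactly one 2-cycle. -/
def Pendant {n : ℕ} (G : Fin n → Fin n → Prop) (i : Fin n) : Prop :=
  ∃! j, Adjd G i j

/-- The class 𝒟: simple symmetric digraphs in which every non-pendant vertex is
adjacent to at least one pendant vertex. -/
def InClassD {n : ℕ} (G : Fin n → Fin n → Prop) : Prop :=
  IsSSD G ∧ ∀ i, ¬ Pendant G i → ∃ j, Adjd G i j ∧ Pendant G j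

/-- Strong connectivity: a directed path from every vertex to every other vertex. -/
def StronglyConnected {n : ℕ} (G : Fin n → Fin n → Prop) : Prop :=
  ∀ i j : Fin n, Relation.ReflTransGen G i j

/-- An unordered pair `e` is a 2-cycle of `G`. -/
def IsEdge {n : ℕ} (G : Fin n → Fin n → Prop) (e : Sym2 (Fin n)) : Prop :=
  ∃ i j, e = s(i, j) ∧ Adjd G i j

/-- A matching: a set of pairwise vertex-disjoint 2-cycles. -/
def IsMatching {n : ℕ} (G : Fin n → Fin n → Prop) (M : Finset (Sym2 (Fin n))) : Prop :=
  (∀ e ∈ M, IsEdge G e) ∧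
  ∀ e ∈ M, ∀ f ∈ M, e ≠ f → ∀ v : Fin n, v ∈ e → v ∉ f

/-- A maximum matching: a matching of maximum cardinality. -/
def IsMaxMatching {n : ℕ} (G : Fin n → Fin n → Prop) (M : Finset (Sym2 (Fin n))) : Prop :=
  IsMatching G M ∧ ∀ M', IsMatching G M' → M'.card ≤ M.card

/-- A cycle chain, recorded by its list of (distinct) vertices `i₁, …, i_{m+1}`. -/
def IsCycleChain {n : ℕ} (G : Fin n → Fin n → Prop) (c : List (Fin n)) : Prop :=
  c.Nodup ∧ 2 ≤ c.length ∧ c.Chain' (Adjd G)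

/-- A cycle chain from `i` to `j`. -/
def IsCycleChainBtw {n : ℕ} (G : Fin n → Fin n → Prop) (i j : Fin n) (c : List (Fin n)) : Prop :=
  IsCycleChain G c ∧ c.head? = some i ∧ c.getLast? = some j

/-- The list of 2-cycles of a cycle chain. -/
def chainEdges {n : ℕ} (c : List (Fin n)) : List (Sym2 (Fin n)) :=
  List.zipWith (fun a b => s(a, b)) c c.tail

/-- The cycle chain `c` is alternating with respect to `M`: its 2-cycles are alternately
in `M` and outside `M`, with the first and last 2-cycle in `M` (so its length is odd). -/
def IsAltChain {n : ℕ} (M : Finset (Sym2 (Fin n))) (c : List (Fin n)) : Prop :=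
  Odd (chainEdges c).length ∧
  ∀ k (h : k < (chainEdges c).length), ((chainEdges c).get ⟨k, h⟩ ∈ M ↔ Even k)

/-- The digraph of a square matrix: edge `(i,j)` iff `A i j ≠ 0`. -/
def DA {n : ℕ} (A : Matrix (Fin n) (Fin n) ℝ) : Fin n → Fin n → Prop :=
  fun i j => A i j ≠ 0

/-- The cycle product `a_{ij} a_{ji}` of a 2-cycle. -/
def cycProd {n : ℕ} (A : Matrix (Fin n) (Fin n) ℝ) (e : Sym2 (Fin n)) : ℝ :=
  Sym2.lift ⟨fun i j => A i j * A j i, fun i j => mul_comm _ _⟩ e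

/-- The matching product η(M) of a matching `M`. -/
noncomputable def matchProd {n : ℕ} (A : Matrix (Fin n) (Fin n) ℝ)
    (M : Finset (Sym2 (Fin n))) : ℝ :=
  ∏ e ∈ M, cycProd A e

/-- The (finite) collection of all maximum matchings of `D(A)`. -/
noncomputable def maxMatchings {n : ℕ} (A : Matrix (Fin n) (Fin n) ℝ) :
    Finset (Finset (Sym2 (Fin n))) :=
  {M | IsMaxMatching (DA A) M}.toFinite.toFinset

/-- Δ_A: the sum of the matching products over all maximum matchings of `D(A)`. -/
noncomputable def Delta {n : ℕ} (A : Matrix (Fin n) (Fin n) ℝ) : ℝ :=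
  ∑ M ∈ maxMatchings A, matchProd A M

/-- 𝕄(i,j): maximum matchings with respect to which some cycle chain from `i` to `j`
is an alternating cycle chain. -/
def MMset {n : ℕ} (A : Matrix (Fin n) (Fin n) ℝ) (i j : Fin n) :
    Set (Finset (Sym2 (Fin n))) :=
  {M | IsMaxMatching (DA A) M ∧ ∃ c, IsCycleChainBtw (DA A) i j c ∧ IsAltChain M c}

/-- `i` and `j` are maximally matchable: 𝕄(i,j) ≠ ∅. -/
def MaxMatchable {n : ℕ} (A : Matrix (Fin n) (Fin n) ℝ) (i j : Fin n) : Prop :=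
  (MMset A i j).Nonempty

open scoped Classical in
/-- The (unique) alternating cycle chain from `i` to `j`, when it exists. -/
noncomputable def theChain {n : ℕ} (A : Matrix (Fin n) (Fin n) ℝ) (i j : Fin n) :
    List (Fin n) :=
  if h : ∃ c, IsCycleChainBtw (DA A) i j c ∧ ∃ M ∈ MMset A i j, IsAltChain M c
  then h.choose else []

/-- The path product along a cycle chain: `a_{i₁ i₂} a_{i₂ i₃} ⋯ a_{i_m i_{m+1}}`. -/
def pathProd {n : ℕ} (A : Matrix (Fin n) (Fin n) ℝ) (c : List (Fin n)) : ℝ :=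
  (List.zipWith (fun a b => A a b) c c.tail).prod

open scoped Classical in
/-- β_{ij} = (−1)^{(m−1)/2} P_m(i,j) for maximally matchable `i, j`, and `0` otherwise. -/
noncomputable def beta {n : ℕ} (A : Matrix (Fin n) (Fin n) ℝ) (i j : Fin n) : ℝ :=
  if MaxMatchable A i j then
    (-1 : ℝ) ^ (((theChain A i j).length - 2) / 2) * pathProd A (theChain A i j)
  else 0

/-- β̄_{i,j}(M): product of the cycle products of the 2-cycles of `M` not contained in
the alternating cycle chain from `i` to `j`. -/
noncomputable def betaBar {n : ℕ} (A : Matrix (Fin n) (Fin n) ℝ) (i j : Fin n)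
    (M : Finset (Sym2 (Fin n))) : ℝ :=
  ∏ e ∈ M.filter (fun e => e ∉ chainEdges (theChain A i j)), cycProd A e

/-- μ_{ij} = β_{ij} · Σ_{M ∈ 𝕄(i,j)} β̄_{i,j}(M). -/
noncomputable def mu {n : ℕ} (A : Matrix (Fin n) (Fin n) ℝ) (i j : Fin n) : ℝ :=
  beta A i j * ∑ M ∈ (MMset A i j).toFinite.toFinset, betaBar A i j M

/-- `X` is a group inverse of `A`. -/
def IsGroupInverse {n : ℕ} (A X : Matrix (Fin n) (Fin n) ℝ) : Prop :=
  A * X * A = A ∧ X * A * X = X ∧ A * X = X * A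

/-- A tree digraph: strongly connected and all of its cycles have length 2. -/
def IsTreeDigraph {n : ℕ} (G : Fin n → Fin n → Prop) : Prop :=
  StronglyConnected G ∧
  ∀ (a : Fin n) (l : List (Fin n)), (a :: l).Nodup → List.Chain G a l →
    G ((a :: l).getLast (List.cons_ne_nil a l)) a → (a :: l).length = 2

/-- A star tree digraph: a tree digraph with a center adjacent to every other vertex,
every other vertex being adjacent only to the center. -/
def IsStarTree {n : ℕ} (G : Fin n → Fin n → Prop) : Prop :=
  IsTreeDigraph G ∧
  ∃ c : Fin n, (∀ j, j ≠ c → Adjd G c j) ∧ ∀ i j, Adjd G i j → i = c ∨ j = c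

/-- A corona digraph: a simple symmetric digraph in which each non-pendant vertex is
adjacent to exactly one pendant vertex. -/
def IsCorona {n : ℕ} (G : Fin n → Fin n → Prop) : Prop :=
  IsSSD G ∧ ∀ i, ¬ Pendant G i → ∃! j, Adjd G i j ∧ Pendant G j

/-- 𝕄(i): the maximum matchings in which vertex `i` is matched. -/
noncomputable def MMi {n : ℕ} (A : Matrix (Fin n) (Fin n) ℝ) (i : Fin n) :
    Finset (Finset (Sym2 (Fin n))) :=
  {M | IsMaxMatching (DA A) M ∧ ∃ e ∈ M, i ∈ e}.toFinite.toFinset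

/-!
Let `F` be the set of pendant vertices of `D(A)` (or one vertex of `D(A)`, if `D(A)` is a single
2-cycle), and write `s p` for the neighbour of `p ∈ F`. No two vertices of `F` are adjacent and
every other vertex is adjacent to some `p ∈ F`, so the maximum matchings are exactly the sets
`{(w, γ w) | w ∉ F}` with `γ w ∈ F` and `s (γ w) = w`, and `Δ_A = ∏_{w ∉ F} d_w` where
`d_w = Σ_{p ∈ F} a_{wp} a_{pw}`. Interior vertices of a cycle chain are not pendant, so an
alternating cycle chain is either a single matched 2-cycle `(p, s p)` or `p, s p, s q, q` with
`p, q ∈ F`. Hence `μ_{ij}/Δ_A` is `a_{ij}/d_w` on a 2-cycle `(p, w)` with `w = s p`,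
`-a_{p,s p} a_{s p,s q} a_{s q,q}/(d_{s p} d_{s q})` for `p, q ∈ F`, and `0` otherwise.

These are the entries of `X = PAY + YAP - PAYAYAP`, where `P` is the coordinate projection onto
`F`, `Q = 1 - P`, and `Y` inverts `QAPAQ = diag(d)` on the range of `Q`. Since `PAP = 0`, a
computation in the Peirce decomposition of `A` along `P` shows that `X` is a group inverse of `A`,
and group inverses are unique.
-/

open Finset

section GroupInverse

variable {R : Type*}

theorem groupInverse_unique [Semigroup R] {a x y : R}
    (hx : a * x * a = a ∧ x * a * x = x ∧ a * x = x * a)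
    (hy : a * y * a = a ∧ y * a * y = y ∧ a * y = y * a) : x = y := by
  obtain ⟨hx₁, hx₂, hx₃⟩ := hx
  obtain ⟨hy₁, hy₂, hy₃⟩ := hy
  have hax : a * x = a * y := by
    calc a * x = a * y * a * x := by rw [hy₁]
      _ = y * a * (x * a) := by rw [mul_assoc (a * y), hx₃, hy₃]
      _ = y * (a * x * a) := by simp only [mul_assoc]
      _ = a * y := by rw [hx₁, hy₃]
  calc x = x * a * x := hx₂.symm
    _ = a * x * x := by rw [hx₃]
    _ = a * y * x := by rw [hax]
    _ = y * (a * x) := by rw [hy₃, mul_assoc]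
    _ = y * a * y := by rw [hax, mul_assoc]
    _ = y := hy₂

theorem groupInverse_of_corner [Ring R] {p q a y : R} (hp : IsIdempotentElem p)
    (hpq : p + q = 1) (hpap : p * a * p = 0) (hqy : q * y = y) (hyq : y * q = y)
    (hl : y * (q * a * p * a * q) = q) (hr : q * a * p * a * q * y = q) :
    let x := p * a * y + y * a * p - p * a * y * a * y * a * p
    a * x * a = a ∧ x * a * x = x ∧ a * x = x * a := by
  intro x
  have hq : q = 1 - p := eq_sub_of_add_eq' hpq
  have hqp : q * p = 0 := by rw [hq, sub_mul, one_mul, hp.eq, sub_self]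
  have hpy : p * y = 0 := by
    rw [← hqy, ← mul_assoc, hq, mul_sub, mul_one, hp.eq, sub_self, zero_mul]
  set u := p * a * y
  set v := y * a * p
  have hx : x = u + v - u * a * v := by simp only [x, u, v, mul_assoc]
  have hl' : v * a * q = q := by simpa only [v, ← mul_assoc, hyq] using hl
  have hr' : q * a * u = q := by simpa only [u, mul_assoc, hqy] using hr
  have hau : a * u = q := by
    calc a * u = (p + q) * a * u := by rw [hpq, one_mul]
      _ = p * a * p * a * y + q * a * u := by simp only [u, add_mul, mul_assoc]
      _ = q := by rw [hpap, zero_mul, zero_mul, zero_add, hr']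
  have hva : v * a = q := by
    calc v * a = v * a * (p + q) := by rw [hpq, mul_one]
      _ = y * a * (p * a * p) + v * a * q := by simp only [v, mul_add, mul_assoc]
      _ = q := by rw [hpap, mul_zero, zero_add, hl']
  have hax : a * x = q + p * a * v := by
    calc a * x = a * u + (p + q) * a * v - a * u * a * v := by
          rw [hx, hpq, one_mul]; noncomm_ring
      _ = q + p * a * v := by rw [hau]; noncomm_ring
  have hxa : x * a = q + p * a * v := by
    calc x * a = u * a * (p + q) + v * a - u * (a * v * a) := by
          rw [hx, hpq, mul_one]; noncomm_ring
      _ = q + p * a * v := by rw [mul_assoc a v, hva]; simp only [u, v, mul_assoc]; noncomm_ring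
  refine ⟨?_, ?_, hax.trans hxa.symm⟩
  · calc a * x * a = q * a + p * a * (v * a) := by rw [hax]; noncomm_ring
      _ = a := by rw [hva, hq, mul_sub, mul_one, hpap]; noncomm_ring
  · have hqu : q * u = 0 := by simp only [u, ← mul_assoc, hqp, zero_mul]
    have hqv : q * v = v := by simp only [v, ← mul_assoc, hqy]
    have hvu : v * u = y := by
      calc v * u = y * a * (p * p) * a * y := by simp only [u, v, mul_assoc]
        _ = v * a * y := by rw [hp.eq]
        _ = y := by rw [hva, hqy]
    have hvv : v * v = 0 := by
      calc v * v = y * a * (p * y) * a * p := by simp only [v, mul_assoc]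
        _ = 0 := by rw [hpy, mul_zero, zero_mul, zero_mul]
    calc x * a * x = q * u + q * v - q * u * a * v + p * a * (v * u) + p * a * (v * v) -
          p * a * (v * u) * a * v := by rw [hxa, hx]; noncomm_ring
      _ = x := by rw [hqu, hqv, hvu, hvv, hx]; simp only [u]; noncomm_ring

end GroupInverse

theorem Finset.sum_piFinset_prod_eq_prod_sum {ι α β : Type*} [Fintype ι] [DecidableEq ι]
    [CommSemiring β] {S : ι → Finset α} {U : Finset ι} (hS : ∀ i ∉ U, #(S i) = 1)
    (g : ι → α → β) :
    ∑ γ ∈ Fintype.piFinset S, ∏ i ∈ U, g i (γ i) = ∏ i ∈ U, ∑ a ∈ S i, g i a := by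
  have h := prod_univ_sum S fun i a => if i ∈ U then g i a else 1
  simp only [prod_ite_mem, univ_inter] at h
  calc _ = ∏ i, ∑ a ∈ S i, if i ∈ U then g i a else 1 := h.symm
    _ = ∏ i, if i ∈ U then ∑ a ∈ S i, g i a else 1 := by
      refine prod_congr rfl fun i _ => ?_
      split_ifs with hi
      · rfl
      · rw [sum_const, hS i hi, one_smul]
    _ = _ := by rw [prod_ite_mem, univ_inter]

section Digraph

variable {n : ℕ} {G : Fin n → Fin n → Prop}

theorem Adjd.symm {i j : Fin n} (h : Adjd G i j) : Adjd G j i :=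
  ⟨h.1.symm, h.2.2, h.2.1⟩

theorem isEdge_mk_iff {i j : Fin n} : IsEdge G s(i, j) ↔ Adjd G i j := by
  refine ⟨fun ⟨u, v, huv, h⟩ => ?_, fun h => ⟨i, j, rfl, h⟩⟩
  rcases Sym2.eq_iff.mp huv with ⟨rfl, rfl⟩ | ⟨rfl, rfl⟩
  exacts [h, h.symm]

theorem IsMatching.eq_of_mem_of_mem {M : Finset (Sym2 (Fin n))} (hM : IsMatching G M)
    {e f : Sym2 (Fin n)} (he : e ∈ M) (hf : f ∈ M) {v : Fin n} (hve : v ∈ e) (hvf : v ∈ f) :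
    e = f :=
  by_contra fun hef => hM.2 e he f hf hef v hve hvf

theorem IsMatching.card_le {M : Finset (Sym2 (Fin n))} (hM : IsMatching G M)
    {t : Finset (Fin n)} (ht : ∀ e ∈ M, ∃ v ∈ t, v ∈ e) : #M ≤ #t :=
  card_le_card_of_forall_subsingleton (fun e v => v ∈ e) ht
    fun _ _ _ ⟨he, hve⟩ _ ⟨hf, hvf⟩ => hM.eq_of_mem_of_mem he hf hve hvf

open Classical in
/-- For a pendant vertex its unique neighbour; for any other vertex some neighbour, or the vertex
itself if it is isolated. -/
noncomputable def supportVertex (G : Fin n → Fin n → Prop) (p : Fin n) : Fin n :=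
  if h : ∃ j, Adjd G p j then h.choose else p

theorem Pendant.adjd_supportVertex {p : Fin n} (hp : Pendant G p) :
    Adjd G p (supportVertex G p) := by
  have h : ∃ j, Adjd G p j := hp.exists
  rw [supportVertex, dif_pos h]
  exact h.choose_spec

theorem Pendant.eq_supportVertex {p j : Fin n} (hp : Pendant G p) (h : Adjd G p j) :
    j = supportVertex G p :=
  hp.unique h hp.adjd_supportVertex

theorem not_pendant_of_adjd_of_adjd {v a b : Fin n} (ha : Adjd G v a) (hb : Adjd G v b)
    (hab : a ≠ b) : ¬ Pendant G v :=
  fun hv => hab (hv.unique ha hb)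

theorem isCycleChainBtw_pair {x y : Fin n} (h : Adjd G x y) : IsCycleChainBtw G x y [x, y] :=
  ⟨⟨by simp [h.1], by simp, List.isChain_pair.mpr h⟩, rfl, rfl⟩

theorem isAltChain_pair_iff {M : Finset (Sym2 (Fin n))} {x y : Fin n} :
    IsAltChain M [x, y] ↔ s(x, y) ∈ M := by
  refine ⟨fun h => (h.2 0 (by simp [chainEdges])).mpr Even.zero,
    fun h => ⟨by simp [chainEdges], fun k hk => ?_⟩⟩
  obtain rfl : k = 0 := by simpa [chainEdges] using hk
  exact iff_of_true h Even.zero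

theorem isAltChain_quad_iff {M : Finset (Sym2 (Fin n))} {a b c d : Fin n} :
    IsAltChain M [a, b, c, d] ↔ s(a, b) ∈ M ∧ s(b, c) ∉ M ∧ s(c, d) ∈ M := by
  refine ⟨fun h => ⟨(h.2 0 (by simp [chainEdges])).mpr Even.zero,
    fun hbc => by simpa using (h.2 1 (by simp [chainEdges])).mp hbc,
    (h.2 2 (by simp [chainEdges])).mpr even_two⟩,
    fun ⟨hab, hbc, hcd⟩ => ⟨by simp [chainEdges]; decide, fun k hk => ?_⟩⟩
  have hk : k < 3 := by simpa [chainEdges] using hk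
  interval_cases k
  · exact iff_of_true hab Even.zero
  · exact iff_of_false hbc (by decide)
  · exact iff_of_true hcd even_two

end Digraph

/-! ### Maximum matchings of a digraph with a leaf set -/

section LeafSet

variable {n : ℕ} {G : Fin n → Fin n → Prop}

/-- In a strongly connected digraph of class 𝒟 the pendant vertices form a leaf set, unless the
digraph is a single 2-cycle, where either one of its two vertices does. -/
structure IsLeafSet (G : Fin n → Fin n → Prop) (F : Finset (Fin n)) : Prop where
  pendant : ∀ p ∈ F, Pendant G p
  not_adjd : ∀ p ∈ F, ∀ q ∈ F, ¬ Adjd G p q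
  exists_adjd : ∀ w ∉ F, ∃ p ∈ F, Adjd G w p

theorem exists_isLeafSet (hD : InClassD G) (hSC : StronglyConnected G) : ∃ F, IsLeafSet G F := by
  classical
  by_cases h : ∃ p q, Pendant G p ∧ Pendant G q ∧ Adjd G p q
  · obtain ⟨p, q, hp, hq, hpq⟩ := h
    have hreach : ∀ k, k = p ∨ k = q := fun k => by
      induction hSC p k with
      | refl => exact Or.inl rfl
      | @tail b c _ hbc ih =>
        have hbc' : Adjd G b c := ⟨fun e => hD.1.1 b (e ▸ hbc), hbc, hD.1.2 b c hbc⟩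
        rcases ih with rfl | rfl
        exacts [Or.inr (hp.unique hbc' hpq), Or.inl (hq.unique hbc' hpq.symm)]
    refine ⟨{q}, by simpa using hq, by simp [Adjd], fun w hw => ⟨q, mem_singleton_self q, ?_⟩⟩
    rcases hreach w with rfl | rfl
    exacts [hpq, absurd (mem_singleton_self _) hw]
  · push Not at h
    refine ⟨univ.filter (Pendant G), fun p hp => (mem_filter.mp hp).2,
      fun p hp q hq => h p q (mem_filter.mp hp).2 (mem_filter.mp hq).2, fun w hw => ?_⟩
    obtain ⟨p, hwp, hp⟩ := hD.2 w (by simpa using hw)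
    exact ⟨p, by simpa using hp, hwp⟩

open Classical in
noncomputable def leavesAt (G : Fin n → Fin n → Prop) (F : Finset (Fin n)) (w : Fin n) :
    Finset (Fin n) :=
  F.filter (Adjd G w)

theorem mem_leavesAt {F : Finset (Fin n)} {w p : Fin n} :
    p ∈ leavesAt G F w ↔ p ∈ F ∧ Adjd G w p := by
  simp [leavesAt]

def pairEdges (T : Finset (Fin n)) (γ : Fin n → Fin n) : Finset (Sym2 (Fin n)) :=
  T.image fun w => s(w, γ w)

/-- The admissible values of `γ w` for the maximum matchings `pairEdges Fᶜ γ` that contain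
`pairEdges T c₀`. -/
noncomputable def leafChoices (G : Fin n → Fin n → Prop) (F T : Finset (Fin n))
    (c₀ : Fin n → Fin n) (w : Fin n) : Finset (Fin n) :=
  if w ∈ F then {w} else if w ∈ T then {c₀ w} else leavesAt G F w

theorem card_leafChoices_of_notMem {F T : Finset (Fin n)} {c₀ : Fin n → Fin n} {w : Fin n}
    (hw : w ∉ Fᶜ \ T) : #(leafChoices G F T c₀ w) = 1 := by
  rw [mem_sdiff, mem_compl, not_and, not_not] at hw
  unfold leafChoices
  split_ifs with hwF hwT
  · rfl
  · rfl
  · exact absurd (hw hwF) hwT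

theorem mem_leavesAt_of_mem_piFinset_leafChoices {F T : Finset (Fin n)} {c₀ γ : Fin n → Fin n}
    (hc₀ : ∀ w ∈ T, c₀ w ∈ leavesAt G F w) (hγ : γ ∈ Fintype.piFinset (leafChoices G F T c₀)) :
    ∀ w ∉ F, γ w ∈ leavesAt G F w := by
  intro w hw
  have h := Fintype.mem_piFinset.mp hγ w
  rw [leafChoices, if_neg hw] at h
  split_ifs at h with hwT
  · exact mem_singleton.mp h ▸ hc₀ w hwT
  · exact h

namespace IsLeafSet

variable {F : Finset (Fin n)} (hF : IsLeafSet G F)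
include hF

theorem supportVertex_notMem {p : Fin n} (hp : p ∈ F) : supportVertex G p ∉ F :=
  fun h => hF.not_adjd p hp _ h (hF.pendant p hp).adjd_supportVertex

theorem eq_supportVertex {p w : Fin n} (hp : p ∈ F) (h : Adjd G w p) : w = supportVertex G p :=
  (hF.pendant p hp).eq_supportVertex h.symm

theorem notMem_of_mem_leavesAt {w p : Fin n} (hp : p ∈ leavesAt G F w) : w ∉ F := by
  rw [mem_leavesAt] at hp
  exact fun hw => hF.not_adjd w hw p hp.1 hp.2

theorem exists_notMem_of_isEdge {e : Sym2 (Fin n)} (he : IsEdge G e) : ∃ v ∈ e, v ∉ F := by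
  obtain ⟨i, j, rfl, h⟩ := he
  by_cases hi : i ∈ F
  · exact ⟨j, Sym2.mem_mk_right i j, fun hj => hF.not_adjd i hi j hj h⟩
  · exact ⟨i, Sym2.mem_mk_left i j, hi⟩

theorem exists_leaf_choice : ∃ γ : Fin n → Fin n, ∀ w ∉ F, γ w ∈ leavesAt G F w := by
  choose! γ hγ using hF.exists_adjd
  exact ⟨γ, fun w hw => mem_leavesAt.mpr (hγ w hw)⟩

theorem eq_ite_of_mem_mk {w p v : Fin n} (hp : p ∈ leavesAt G F w) (hv : v ∈ s(w, p)) :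
    w = if v ∈ F then supportVertex G v else v := by
  rcases Sym2.mem_iff.mp hv with rfl | rfl
  · rw [if_neg (hF.notMem_of_mem_leavesAt hp)]
  · have hp' := mem_leavesAt.mp hp
    rw [if_pos hp'.1]
    exact hF.eq_supportVertex hp'.1 hp'.2

variable {γ : Fin n → Fin n} (hγ : ∀ w ∉ F, γ w ∈ leavesAt G F w)
include hγ

theorem isMatching_pairEdges : IsMatching G (pairEdges Fᶜ γ) := by
  refine ⟨fun e he => ?_, fun e he f hf hef v hve hvf => hef ?_⟩
  · obtain ⟨w, hw, rfl⟩ := mem_image.mp he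
    exact isEdge_mk_iff.mpr (mem_leavesAt.mp (hγ w (mem_compl.mp hw))).2
  · obtain ⟨w, hw, rfl⟩ := mem_image.mp he
    obtain ⟨w', hw', rfl⟩ := mem_image.mp hf
    rw [hF.eq_ite_of_mem_mk (hγ w (mem_compl.mp hw)) hve,
      ← hF.eq_ite_of_mem_mk (hγ w' (mem_compl.mp hw')) hvf]

theorem injOn_mk : Set.InjOn (fun w => s(w, γ w)) (↑F)ᶜ :=
  fun w hw w' hw' (h : s(w, γ w) = s(w', γ w')) => by
    have := hF.eq_ite_of_mem_mk (hγ w' hw') (h ▸ Sym2.mem_mk_left w (γ w))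
    rwa [if_neg (show w ∉ F from hw), eq_comm] at this

theorem card_pairEdges : #(pairEdges Fᶜ γ) = #Fᶜ :=
  card_image_of_injOn (by simpa using hF.injOn_mk hγ)

omit hγ

theorem card_le_of_isMatching {M : Finset (Sym2 (Fin n))} (hM : IsMatching G M) :
    #M ≤ #Fᶜ :=
  hM.card_le fun e he => by
    obtain ⟨v, hve, hv⟩ := hF.exists_notMem_of_isEdge (hM.1 e he)
    exact ⟨v, mem_compl.mpr hv, hve⟩

theorem isMaxMatching_pairEdges (hγ : ∀ w ∉ F, γ w ∈ leavesAt G F w) :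
    IsMaxMatching G (pairEdges Fᶜ γ) :=
  ⟨hF.isMatching_pairEdges hγ,
    fun _ hM => (hF.card_pairEdges hγ).symm ▸ hF.card_le_of_isMatching hM⟩

theorem card_eq_of_isMaxMatching {M : Finset (Sym2 (Fin n))} (hM : IsMaxMatching G M) :
    #M = #Fᶜ := by
  obtain ⟨γ, hγ⟩ := hF.exists_leaf_choice
  exact (hF.card_le_of_isMatching hM.1).antisymm
    (hF.card_pairEdges hγ ▸ hM.2 _ (hF.isMatching_pairEdges hγ))

/-- Otherwise every edge of `M` meets `Fᶜ.erase w`, and `M` would be too small. -/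
theorem exists_mem_leavesAt_of_isMaxMatching {M : Finset (Sym2 (Fin n))}
    (hM : IsMaxMatching G M) {w : Fin n} (hw : w ∉ F) :
    ∃ p ∈ leavesAt G F w, s(w, p) ∈ M := by
  by_contra! h
  have hcard : #M ≤ #(Fᶜ.erase w) := hM.1.card_le fun e he => by
    obtain ⟨v, hve, hv⟩ := hF.exists_notMem_of_isEdge (hM.1.1 e he)
    by_cases hvw : v = w
    · subst hvw
      obtain ⟨u, rfl⟩ := Sym2.mem_iff_exists.mp hve
      have hvu := isEdge_mk_iff.mp (hM.1.1 _ he)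
      have hu : u ∉ F := fun hu => h u (mem_leavesAt.mpr ⟨hu, hvu⟩) he
      exact ⟨u, mem_erase.mpr ⟨hvu.1.symm, mem_compl.mpr hu⟩, Sym2.mem_mk_right v u⟩
    · exact ⟨v, mem_erase.mpr ⟨hvw, mem_compl.mpr hv⟩, hve⟩
  rw [card_erase_of_mem (mem_compl.mpr hw), ← hF.card_eq_of_isMaxMatching hM] at hcard
  have : 0 < #M := hF.card_eq_of_isMaxMatching hM ▸ card_pos.mpr ⟨w, mem_compl.mpr hw⟩
  omega

variable {T : Finset (Fin n)} {c₀ : Fin n → Fin n} (hc₀ : ∀ w ∈ T, c₀ w ∈ leavesAt G F w)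
include hc₀

theorem isMaxMatching_and_subset_iff {M : Finset (Sym2 (Fin n))} :
    IsMaxMatching G M ∧ pairEdges T c₀ ⊆ M ↔
      ∃ γ ∈ Fintype.piFinset (leafChoices G F T c₀), pairEdges Fᶜ γ = M := by
  constructor
  · rintro ⟨hM, hTM⟩
    have : ∀ w, ∃ p ∈ leafChoices G F T c₀ w, w ∉ F → s(w, p) ∈ M := by
      intro w
      by_cases hw : w ∈ F
      · exact ⟨w, by simp [leafChoices, hw], fun h => absurd hw h⟩
      by_cases hwT : w ∈ T
      · exact ⟨c₀ w, by simp [leafChoices, hw, hwT], fun _ => hTM (mem_image_of_mem _ hwT)⟩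
      obtain ⟨p, hp, hpM⟩ := hF.exists_mem_leavesAt_of_isMaxMatching hM hw
      exact ⟨p, by simpa [leafChoices, hw, hwT] using hp, fun _ => hpM⟩
    choose γ hγ hγM using this
    have hγ' : γ ∈ Fintype.piFinset (leafChoices G F T c₀) := Fintype.mem_piFinset.mpr hγ
    refine ⟨γ, hγ', eq_of_subset_of_card_le ?_ ?_⟩
    · rintro _ he
      obtain ⟨w, hw, rfl⟩ := mem_image.mp he
      exact hγM w (mem_compl.mp hw)
    · rw [hF.card_eq_of_isMaxMatching hM,
        hF.card_pairEdges (mem_leavesAt_of_mem_piFinset_leafChoices hc₀ hγ')]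
  · rintro ⟨γ, hγ, rfl⟩
    refine ⟨hF.isMaxMatching_pairEdges (mem_leavesAt_of_mem_piFinset_leafChoices hc₀ hγ), ?_⟩
    rintro _ he
    obtain ⟨w, hw, rfl⟩ := mem_image.mp he
    have hwF : w ∉ F := hF.notMem_of_mem_leavesAt (hc₀ w hw)
    have h := Fintype.mem_piFinset.mp hγ w
    rw [leafChoices, if_neg hwF, if_pos hw, mem_singleton] at h
    exact h ▸ mem_image_of_mem _ (mem_compl.mpr hwF)

theorem injOn_pairEdges :
    Set.InjOn (pairEdges Fᶜ) (Fintype.piFinset (leafChoices G F T c₀)) := by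
  intro γ hγ γ' hγ' h
  funext w
  by_cases hw : w ∈ F
  · have h₁ := Fintype.mem_piFinset.mp hγ w
    have h₂ := Fintype.mem_piFinset.mp hγ' w
    simp only [leafChoices, if_pos hw, mem_singleton] at h₁ h₂
    rw [h₁, h₂]
  · have hmem : s(w, γ w) ∈ pairEdges Fᶜ γ' := h ▸ mem_image_of_mem _ (mem_compl.mpr hw)
    obtain ⟨w', hw', hww'⟩ := mem_image.mp hmem
    have := hF.eq_ite_of_mem_mk
      (mem_leavesAt_of_mem_piFinset_leafChoices hc₀ hγ' w' (mem_compl.mp hw'))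
      (hww' ▸ Sym2.mem_mk_left w (γ w))
    rw [if_neg hw] at this
    subst this
    exact (Sym2.congr_right.mp hww').symm

theorem pairEdges_compl_sdiff {γ : Fin n → Fin n}
    (hγ : γ ∈ Fintype.piFinset (leafChoices G F T c₀)) :
    pairEdges Fᶜ γ \ pairEdges T c₀ = pairEdges (Fᶜ \ T) γ := by
  have hTF : T ⊆ Fᶜ := fun w hw => mem_compl.mpr (hF.notMem_of_mem_leavesAt (hc₀ w hw))
  have hγT : pairEdges T c₀ = pairEdges T γ := image_congr fun w hw => by
    have h := Fintype.mem_piFinset.mp hγ w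
    rw [leafChoices, if_neg (mem_compl.mp (hTF hw)), if_pos (mem_coe.mp hw), mem_singleton] at h
    rw [h]
  have hinj := hF.injOn_mk (mem_leavesAt_of_mem_piFinset_leafChoices hc₀ hγ)
  rw [hγT, pairEdges, pairEdges, pairEdges, image_sdiff_of_injOn (by simpa using hinj) hTF]

theorem exists_isMaxMatching_superset : ∃ M, IsMaxMatching G M ∧ pairEdges T c₀ ⊆ M := by
  obtain ⟨γ, hγ⟩ : (Fintype.piFinset (leafChoices G F T c₀)).Nonempty := by
    refine Fintype.piFinset_nonempty.mpr fun w => ?_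
    unfold leafChoices
    split_ifs with hwF
    · exact singleton_nonempty w
    · exact singleton_nonempty _
    · obtain ⟨p, hp, hwp⟩ := hF.exists_adjd w hwF
      exact ⟨p, mem_leavesAt.mpr ⟨hp, hwp⟩⟩
  exact ⟨_, (hF.isMaxMatching_and_subset_iff hc₀).mpr ⟨γ, hγ, rfl⟩⟩

end IsLeafSet

end LeafSet

/-! ### Alternating cycle chains -/

namespace IsLeafSet

variable {n : ℕ} {G : Fin n → Fin n → Prop} {F : Finset (Fin n)} (hF : IsLeafSet G F)
  {M : Finset (Sym2 (Fin n))} (hM : IsMaxMatching G M)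
include hF hM

theorem exists_eq_of_mem_isMaxMatching {e : Sym2 (Fin n)} (he : e ∈ M) :
    ∃ p ∈ F, e = s(supportVertex G p, p) := by
  obtain ⟨γ, hγ, rfl⟩ := (hF.isMaxMatching_and_subset_iff (T := ∅) (c₀ := id) (by simp)).mp
    ⟨hM, by simp [pairEdges]⟩
  obtain ⟨w, hw, rfl⟩ := mem_image.mp he
  have hp := mem_leavesAt.mp
    (mem_leavesAt_of_mem_piFinset_leafChoices (by simp) hγ w (mem_compl.mp hw))
  exact ⟨γ w, hp.1, by rw [← hF.eq_supportVertex hp.1 hp.2]⟩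

theorem mem_and_eq_of_mk_mem {u v : Fin n} (h : s(u, v) ∈ M) (hv : v ∉ F) :
    u ∈ F ∧ v = supportVertex G u := by
  obtain ⟨p, hp, huv⟩ := hF.exists_eq_of_mem_isMaxMatching hM h
  rcases Sym2.eq_iff.mp huv with ⟨-, rfl⟩ | ⟨rfl, rfl⟩
  exacts [absurd hp hv, ⟨hp, rfl⟩]

/-- Interior vertices of a chain have two neighbours, so they lie outside `F`; the matched
2-cycles at both ends then join a leaf to its support vertex, and the chain cannot go on. -/
theorem isAltChain_cases {c : List (Fin n)} (hc : IsCycleChain G c) (ha : IsAltChain M c) :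
    (∃ x y, c = [x, y] ∧ s(x, y) ∈ M) ∨
      ∃ p ∈ F, ∃ q ∈ F, c = [p, supportVertex G p, supportVertex G q, q] := by
  obtain ⟨hnd, hlen, hch⟩ := hc
  match c, hnd, hlen, hch, ha with
  | [x, y], _, _, _, ha => exact Or.inl ⟨x, y, rfl, isAltChain_pair_iff.mp ha⟩
  | [_, _, _], _, _, _, ha => exact absurd ha.1 (by simp [chainEdges])
  | a :: b :: x :: y :: rest, hnd, _, hch, ha =>
    have hM₀ : s(a, b) ∈ M := (ha.2 0 (by simp [chainEdges])).mpr Even.zero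
    have hM₂ : s(x, y) ∈ M := (ha.2 2 (by simp [chainEdges])).mpr even_two
    obtain ⟨hab, hch₁⟩ := List.isChain_cons_cons.mp hch
    obtain ⟨hbx, hch₂⟩ := List.isChain_cons_cons.mp hch₁
    obtain ⟨hxy, hch₃⟩ := List.isChain_cons_cons.mp hch₂
    simp only [List.nodup_cons, List.mem_cons, not_or] at hnd
    have hb : b ∉ F := fun hb =>
      not_pendant_of_adjd_of_adjd hab.symm hbx hnd.1.2.1 (hF.pendant b hb)
    have hx : x ∉ F := fun hx =>
      not_pendant_of_adjd_of_adjd hbx.symm hxy hnd.2.1.2.1 (hF.pendant x hx)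
    obtain ⟨haF, rfl⟩ := hF.mem_and_eq_of_mk_mem hM hM₀ hb
    obtain ⟨hyF, rfl⟩ := hF.mem_and_eq_of_mk_mem hM (Sym2.eq_swap ▸ hM₂) hx
    cases rest with
    | nil => exact Or.inr ⟨a, haF, y, hyF, rfl⟩
    | cons z rest =>
      have hyz := (List.isChain_cons_cons.mp hch₃).1
      have hxz : supportVertex G y ≠ z := fun h => hnd.2.2.1.2 (h ▸ List.mem_cons_self)
      exact absurd (hF.pendant y hyF) (not_pendant_of_adjd_of_adjd hxy.symm hyz hxz)

theorem isAltChain_iff_of_mk_eq {p i j : Fin n} (hp : p ∈ F)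
    (hij : s(i, j) = s(supportVertex G p, p)) (c : List (Fin n)) :
    IsCycleChainBtw G i j c ∧ IsAltChain M c ↔ c = [i, j] ∧ s(i, j) ∈ M := by
  refine ⟨fun ⟨hb, ha⟩ => ?_, fun ⟨hc, h⟩ => hc ▸ ⟨isCycleChainBtw_pair ?_,
    isAltChain_pair_iff.mpr h⟩⟩
  · rcases hF.isAltChain_cases hM hb.1 ha with ⟨x, y, rfl, hxy⟩ | ⟨p', hp', q', hq', rfl⟩
    · obtain ⟨rfl, rfl⟩ : x = i ∧ y = j := by simpa using hb.2
      exact ⟨rfl, hxy⟩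
    · obtain ⟨rfl, rfl⟩ : p' = i ∧ q' = j := by simpa using hb.2
      rcases Sym2.eq_iff.mp hij with ⟨rfl, -⟩ | ⟨-, rfl⟩
      · exact absurd hp' (hF.supportVertex_notMem hp)
      · exact absurd hq' (hF.supportVertex_notMem hp)
  · exact isEdge_mk_iff.mp (hij ▸ isEdge_mk_iff.mpr (hF.pendant p hp).adjd_supportVertex.symm)

theorem isAltChain_iff_of_adjd {i j : Fin n} (hi : i ∈ F) (hj : j ∈ F)
    (hadj : Adjd G (supportVertex G i) (supportVertex G j)) (c : List (Fin n)) :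
    IsCycleChainBtw G i j c ∧ IsAltChain M c ↔
      c = [i, supportVertex G i, supportVertex G j, j] ∧
        s(supportVertex G i, i) ∈ M ∧ s(supportVertex G j, j) ∈ M := by
  set u := supportVertex G i
  set v := supportVertex G j
  have hiu : Adjd G i u := (hF.pendant i hi).adjd_supportVertex
  have hjv : Adjd G j v := (hF.pendant j hj).adjd_supportVertex
  have hu : u ∉ F := hF.supportVertex_notMem hi
  have hv : v ∉ F := hF.supportVertex_notMem hj
  constructor
  · rintro ⟨hb, ha⟩
    rcases hF.isAltChain_cases hM hb.1 ha with ⟨x, y, rfl, hxy⟩ | ⟨p, -, q, -, rfl⟩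
    · obtain ⟨rfl, rfl⟩ : x = i ∧ y = j := by simpa using hb.2
      obtain ⟨p, hp, hij⟩ := hF.exists_eq_of_mem_isMaxMatching hM hxy
      rcases Sym2.eq_iff.mp hij with ⟨rfl, -⟩ | ⟨-, rfl⟩
      · exact absurd hi (hF.supportVertex_notMem hp)
      · exact absurd hj (hF.supportVertex_notMem hp)
    · obtain ⟨rfl, rfl⟩ : p = i ∧ q = j := by simpa using hb.2
      obtain ⟨h₁, -, h₃⟩ := isAltChain_quad_iff.mp ha
      exact ⟨rfl, Sym2.eq_swap ▸ h₁, h₃⟩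
  · rintro ⟨rfl, h₁, h₃⟩
    have hmid : s(u, v) ∉ M := fun h => hu (hF.mem_and_eq_of_mk_mem hM h hv).1
    refine ⟨⟨⟨?_, by simp, ?_⟩, rfl, rfl⟩, isAltChain_quad_iff.mpr ⟨Sym2.eq_swap ▸ h₁, hmid, h₃⟩⟩
    · have hij : i ≠ j := fun h => hadj.1 (by simp only [u, v, h])
      have hiv : i ≠ v := fun h => hv (h ▸ hi)
      have huj : u ≠ j := fun h => hu (h ▸ hj)
      simp [hiu.1, hiv, hij, hadj.1, huj, hjv.1.symm]
    · exact List.isChain_cons_cons.mpr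
        ⟨hiu, List.isChain_cons_cons.mpr ⟨hadj, List.isChain_pair.mpr hjv.symm⟩⟩

end IsLeafSet

/-! ### The matching sums `Δ_A` and `μ_{ij}` -/

section Mu

variable {n : ℕ} {A : Matrix (Fin n) (Fin n) ℝ}

theorem mem_maxMatchings {M : Finset (Sym2 (Fin n))} :
    M ∈ maxMatchings A ↔ IsMaxMatching (DA A) M := by
  simp [maxMatchings]

theorem mu_eq_zero_of_not_maxMatchable {i j : Fin n} (h : ¬ MaxMatchable A i j) :
    mu A i j = 0 := by
  rw [mu, beta, if_neg h, zero_mul]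

theorem mu_eq_of_isAltChain_iff {i j : Fin n} {c : List (Fin n)} {E : Finset (Sym2 (Fin n))}
    (hc : ∀ M, IsMaxMatching (DA A) M → ∀ c',
      IsCycleChainBtw (DA A) i j c' ∧ IsAltChain M c' ↔ c' = c ∧ E ⊆ M)
    (hE : ∃ M, IsMaxMatching (DA A) M ∧ E ⊆ M)
    (hcE : ∀ M, IsMaxMatching (DA A) M → E ⊆ M → ∀ e ∈ M, e ∈ chainEdges c ↔ e ∈ E) :
    mu A i j = (-1) ^ ((c.length - 2) / 2) * pathProd A c *
      ∑ M ∈ (maxMatchings A).filter (E ⊆ ·), ∏ e ∈ M \ E, cycProd A e := by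
  obtain ⟨M₀, hM₀, hEM₀⟩ := hE
  have hc₀ := (hc M₀ hM₀ c).mpr ⟨rfl, hEM₀⟩
  have hchain : theChain A i j = c := by
    have hex : ∃ c, IsCycleChainBtw (DA A) i j c ∧ ∃ M ∈ MMset A i j, IsAltChain M c :=
      ⟨c, hc₀.1, M₀, ⟨hM₀, c, hc₀⟩, hc₀.2⟩
    rw [theChain, dif_pos hex]
    obtain ⟨hb, M, hM, ha⟩ := hex.choose_spec
    exact ((hc M hM.1 _).mp ⟨hb, ha⟩).1
  have hMM : (MMset A i j).toFinite.toFinset = (maxMatchings A).filter (E ⊆ ·) := by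
    ext M
    rw [Set.Finite.mem_toFinset, mem_filter, mem_maxMatchings]
    constructor
    · rintro ⟨hM, c', h⟩
      exact ⟨hM, ((hc M hM c').mp h).2⟩
    · rintro ⟨hM, hEM⟩
      exact ⟨hM, c, (hc M hM c).mpr ⟨rfl, hEM⟩⟩
  rw [mu, beta, if_pos ⟨M₀, hM₀, c, hc₀⟩, hchain, hMM]
  refine congrArg _ (sum_congr rfl fun M hM => ?_)
  obtain ⟨hM, hEM⟩ := mem_filter.mp hM
  rw [betaBar, hchain, sdiff_eq_filter]
  exact prod_congr (filter_congr fun e he =>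
    not_congr (hcE M (mem_maxMatchings.mp hM) hEM e he)) fun _ _ => rfl

noncomputable def leafWeight (A : Matrix (Fin n) (Fin n) ℝ) (F : Finset (Fin n)) (w : Fin n) :
    ℝ :=
  ∑ p ∈ F, A w p * A p w

variable {F : Finset (Fin n)}

theorem sum_leavesAt_eq_leafWeight {w : Fin n} (hw : w ∉ F) :
    ∑ p ∈ leavesAt (DA A) F w, A w p * A p w = leafWeight A F w := by
  classical
  rw [leavesAt]
  exact sum_filter_of_ne fun _ hp h =>
    ⟨fun hwp => hw (hwp ▸ hp), left_ne_zero_of_mul h, right_ne_zero_of_mul h⟩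

namespace IsLeafSet

variable (hF : IsLeafSet (DA A) F)
include hF

/-- The maximum matchings through `pairEdges T c₀` are parametrised by the product set
`piFinset (leafChoices _ F T c₀)`, so the sum factorises. -/
theorem sum_prod_sdiff_pairEdges {T : Finset (Fin n)} {c₀ : Fin n → Fin n}
    (hc₀ : ∀ w ∈ T, c₀ w ∈ leavesAt (DA A) F w) :
    ∑ M ∈ (maxMatchings A).filter (pairEdges T c₀ ⊆ ·), ∏ e ∈ M \ pairEdges T c₀, cycProd A e =
      ∏ w ∈ Fᶜ \ T, leafWeight A F w := by
  have himage : (maxMatchings A).filter (pairEdges T c₀ ⊆ ·) =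
      (Fintype.piFinset (leafChoices (DA A) F T c₀)).image (pairEdges Fᶜ) := by
    ext M
    simpa only [mem_filter, mem_maxMatchings, mem_image] using hF.isMaxMatching_and_subset_iff hc₀
  have hsummand : ∀ γ ∈ Fintype.piFinset (leafChoices (DA A) F T c₀),
      ∏ e ∈ pairEdges Fᶜ γ \ pairEdges T c₀, cycProd A e =
        ∏ w ∈ Fᶜ \ T, A w (γ w) * A (γ w) w := fun γ hγ => by
    rw [hF.pairEdges_compl_sdiff hc₀ hγ, pairEdges, prod_image
      ((hF.injOn_mk (mem_leavesAt_of_mem_piFinset_leafChoices hc₀ hγ)).mono (by simp))]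
    rfl
  rw [himage, sum_image (hF.injOn_pairEdges hc₀), sum_congr rfl hsummand,
    sum_piFinset_prod_eq_prod_sum (fun w hw => card_leafChoices_of_notMem hw) fun w p => A w p * A p w]
  refine prod_congr rfl fun w hw => ?_
  obtain ⟨hwF, hwT⟩ := mem_sdiff.mp hw
  rw [leafChoices, if_neg (mem_compl.mp hwF), if_neg hwT,
    sum_leavesAt_eq_leafWeight (mem_compl.mp hwF)]

theorem delta_eq : Delta A = ∏ w ∈ Fᶜ, leafWeight A F w := by
  simpa [pairEdges, Delta, matchProd] using
    hF.sum_prod_sdiff_pairEdges (T := ∅) (c₀ := id) (by simp)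

theorem delta_eq_prod_sdiff_mul {S : Finset (Fin n)} (hS : S ⊆ Fᶜ) :
    Delta A = (∏ w ∈ Fᶜ \ S, leafWeight A F w) * ∏ w ∈ S, leafWeight A F w := by
  rw [hF.delta_eq, prod_sdiff hS]

theorem leafWeight_ne_zero (hΔ : Delta A ≠ 0) {w : Fin n} (hw : w ∉ F) : leafWeight A F w ≠ 0 :=
  prod_ne_zero_iff.mp (hF.delta_eq ▸ hΔ) w (mem_compl.mpr hw)

theorem mu_eq_of_mk_eq {p i j : Fin n} (hp : p ∈ F)
    (hij : s(i, j) = s(supportVertex (DA A) p, p)) :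
    mu A i j = A i j * ∏ w ∈ Fᶜ \ {supportVertex (DA A) p}, leafWeight A F w := by
  have hc₀ : ∀ w ∈ ({supportVertex (DA A) p} : Finset (Fin n)),
      (fun _ => p) w ∈ leavesAt (DA A) F w := by
    simpa [mem_leavesAt] using ⟨hp, (hF.pendant p hp).adjd_supportVertex.symm⟩
  have hE : pairEdges {supportVertex (DA A) p} (fun _ => p) = {s(i, j)} := by
    simp [pairEdges, hij]
  rw [mu_eq_of_isAltChain_iff (c := [i, j]) (E := pairEdges _ _) (fun M hM c => ?_)
    (hF.exists_isMaxMatching_superset hc₀) (fun _ _ _ e _ => ?_),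
    hF.sum_prod_sdiff_pairEdges hc₀]
  · simp [pathProd]
  · rw [hE, singleton_subset_iff]
    exact hF.isAltChain_iff_of_mk_eq hM hp hij c
  · simp [hE, chainEdges]

theorem mu_eq_of_adjd {i j : Fin n} (hi : i ∈ F) (hj : j ∈ F)
    (hadj : Adjd (DA A) (supportVertex (DA A) i) (supportVertex (DA A) j)) :
    mu A i j = -(A i (supportVertex (DA A) i) *
      A (supportVertex (DA A) i) (supportVertex (DA A) j) * A (supportVertex (DA A) j) j) *
        ∏ w ∈ Fᶜ \ {supportVertex (DA A) i, supportVertex (DA A) j}, leafWeight A F w := by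
  set u := supportVertex (DA A) i
  set v := supportVertex (DA A) j
  have hc₀ : ∀ w ∈ ({u, v} : Finset (Fin n)),
      (fun w => if w = u then i else j) w ∈ leavesAt (DA A) F w := by
    simpa [mem_leavesAt, hadj.1.symm] using ⟨⟨hi, (hF.pendant i hi).adjd_supportVertex.symm⟩,
      hj, (hF.pendant j hj).adjd_supportVertex.symm⟩
  have hE : pairEdges {u, v} (fun w => if w = u then i else j) = {s(u, i), s(v, j)} := by
    simp [pairEdges, hadj.1.symm]
  rw [mu_eq_of_isAltChain_iff (c := [i, u, v, j]) (E := pairEdges _ _) (fun M hM c => ?_)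
    (hF.exists_isMaxMatching_superset hc₀) (fun M hM _ e he => ?_),
    hF.sum_prod_sdiff_pairEdges hc₀]
  · simp only [pathProd, List.tail_cons, List.zipWith_cons_cons, List.zipWith_nil_right,
      List.prod_cons, List.prod_nil, List.length_cons, List.length_nil]
    rw [show (0 + 1 + 1 + 1 + 1 - 2) / 2 = 1 from rfl]
    ring
  · rw [hE, insert_subset_iff, singleton_subset_iff]
    exact hF.isAltChain_iff_of_adjd hM hi hj hadj c
  · have hmid : e ≠ s(u, v) := fun h => hF.supportVertex_notMem hi
      (hF.mem_and_eq_of_mk_mem hM (h ▸ he) (hF.supportVertex_notMem hj)).1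
    simp [hE, chainEdges, hmid, Sym2.eq_swap]

theorem maxMatchable_cases {i j : Fin n} (h : MaxMatchable A i j) :
    (i ∈ F ∧ j = supportVertex (DA A) i) ∨ (j ∈ F ∧ i = supportVertex (DA A) j) ∨
      (i ∈ F ∧ j ∈ F ∧ Adjd (DA A) (supportVertex (DA A) i) (supportVertex (DA A) j)) := by
  obtain ⟨M, hM, c, hb, ha⟩ := h
  rcases hF.isAltChain_cases hM hb.1 ha with ⟨x, y, rfl, hxy⟩ | ⟨p, hp, q, hq, rfl⟩
  · obtain ⟨rfl, rfl⟩ : x = i ∧ y = j := by simpa using hb.2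
    obtain ⟨p, hp, hxy⟩ := hF.exists_eq_of_mem_isMaxMatching hM hxy
    rcases Sym2.eq_iff.mp hxy with ⟨rfl, rfl⟩ | ⟨rfl, rfl⟩
    exacts [Or.inr (Or.inl ⟨hp, rfl⟩), Or.inl ⟨hp, rfl⟩]
  · obtain ⟨rfl, rfl⟩ : p = i ∧ q = j := by simpa using hb.2
    have hch := List.isChain_cons_cons.mp (List.isChain_cons_cons.mp hb.1.2.2).2
    exact Or.inr (Or.inr ⟨hp, hq, hch.1⟩)

end IsLeafSet

end Mu

/-! ### The group inverse -/

section GroupInverseMatrix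

variable {n : ℕ} {A : Matrix (Fin n) (Fin n) ℝ} {F : Finset (Fin n)}

noncomputable def leafProj (F : Finset (Fin n)) : Matrix (Fin n) (Fin n) ℝ :=
  diagonal fun i => if i ∈ F then 1 else 0

noncomputable def leafWeightInv (A : Matrix (Fin n) (Fin n) ℝ) (F : Finset (Fin n)) :
    Matrix (Fin n) (Fin n) ℝ :=
  diagonal fun i => if i ∈ F then 0 else (leafWeight A F i)⁻¹

noncomputable def leafGroupInverse (A : Matrix (Fin n) (Fin n) ℝ) (F : Finset (Fin n)) :
    Matrix (Fin n) (Fin n) ℝ :=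
  let P := leafProj F
  let Y := leafWeightInv A F
  P * A * Y + Y * A * P - P * A * Y * A * Y * A * P

theorem adjd_of_apply_ne_zero (hS : IsSSD (DA A)) {i j : Fin n} (h : A i j ≠ 0) :
    Adjd (DA A) i j :=
  ⟨fun hij => hS.1 i (hij ▸ h), h, hS.2 i j h⟩

namespace IsLeafSet

variable (hF : IsLeafSet (DA A) F) (hS : IsSSD (DA A))
include hF hS

theorem apply_eq_zero_of_mem_of_mem {p q : Fin n} (hp : p ∈ F) (hq : q ∈ F) : A p q = 0 :=
  by_contra fun h => hF.not_adjd p hp q hq (adjd_of_apply_ne_zero hS h)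

theorem apply_eq_zero_of_ne_supportVertex {p k : Fin n} (hp : p ∈ F)
    (hk : k ≠ supportVertex (DA A) p) : A p k = 0 :=
  by_contra fun h => hk ((hF.pendant p hp).eq_supportVertex (adjd_of_apply_ne_zero hS h))

theorem apply_eq_zero_of_ne_supportVertex' {p k : Fin n} (hp : p ∈ F)
    (hk : k ≠ supportVertex (DA A) p) : A k p = 0 :=
  by_contra fun h => hk (hF.eq_supportVertex hp (adjd_of_apply_ne_zero hS h))

theorem sum_leaf_mul (i j : Fin n) :
    ∑ p ∈ F, A i p * A p j = if i = j then leafWeight A F i else 0 := by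
  split_ifs with hij
  · rw [← hij, leafWeight]
  · refine sum_eq_zero fun p hp => ?_
    by_contra h
    have hip := hF.eq_supportVertex hp (adjd_of_apply_ne_zero hS (left_ne_zero_of_mul h))
    have hpj := (hF.pendant p hp).eq_supportVertex
      (adjd_of_apply_ne_zero hS (right_ne_zero_of_mul h))
    exact hij (hip.trans hpj.symm)

theorem corner_eq_diagonal :
    leafProj Fᶜ * A * leafProj F * A * leafProj Fᶜ =
      diagonal fun i => if i ∈ F then 0 else leafWeight A F i := by
  ext i j
  simp only [leafProj]
  rw [mul_diagonal, mul_apply]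
  simp only [mul_diagonal, diagonal_mul, diagonal_apply, mem_compl]
  by_cases hi : i ∈ F
  · simp [hi]
  · simp only [hi, not_false_eq_true, if_true, one_mul, mul_ite, mul_one, mul_zero, ite_mul,
      zero_mul, sum_ite_mem, univ_inter, hF.sum_leaf_mul hS]
    split_ifs <;> simp_all

theorem isGroupInverse_leafGroupInverse (hΔ : Delta A ≠ 0) :
    IsGroupInverse A (leafGroupInverse A F) := by
  have hcorner : ∀ i, (if i ∈ F then (0 : ℝ) else (leafWeight A F i)⁻¹) *
      (if i ∈ F then 0 else leafWeight A F i) = if i ∈ F then 0 else 1 := fun i => by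
    by_cases hi : i ∈ F
    · simp [hi]
    · simp [hi, hF.leafWeight_ne_zero hΔ hi]
  refine groupInverse_of_corner (q := leafProj Fᶜ) ?_ ?_ ?_ ?_ ?_ ?_ ?_
  · rw [IsIdempotentElem, leafProj, diagonal_mul_diagonal]
    exact diagonal_eq_diagonal_iff.mpr fun i => by split_ifs <;> simp
  · rw [leafProj, leafProj, diagonal_add, ← diagonal_one]
    exact diagonal_eq_diagonal_iff.mpr fun i => by by_cases hi : i ∈ F <;> simp [hi]
  · ext i j
    simp only [leafProj, mul_diagonal, diagonal_mul]
    by_cases hi : i ∈ F <;> by_cases hj : j ∈ F <;>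
      simp [hi, hj, hF.apply_eq_zero_of_mem_of_mem hS]
  · rw [leafProj, leafWeightInv, diagonal_mul_diagonal]
    exact diagonal_eq_diagonal_iff.mpr fun i => by by_cases hi : i ∈ F <;> simp [hi]
  · rw [leafProj, leafWeightInv, diagonal_mul_diagonal]
    exact diagonal_eq_diagonal_iff.mpr fun i => by by_cases hi : i ∈ F <;> simp [hi]
  · rw [hF.corner_eq_diagonal hS, leafProj, leafWeightInv, diagonal_mul_diagonal]
    exact diagonal_eq_diagonal_iff.mpr fun i => by rw [hcorner]; simp
  · rw [hF.corner_eq_diagonal hS, leafProj, leafWeightInv, diagonal_mul_diagonal]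
    exact diagonal_eq_diagonal_iff.mpr fun i => by rw [mul_comm, hcorner]; simp

theorem leafGroupInverse_apply (i j : Fin n) :
    leafGroupInverse A F i j =
      if i ∈ F then
        if j ∈ F then
          -(A i (supportVertex (DA A) i) * (leafWeight A F (supportVertex (DA A) i))⁻¹ *
            A (supportVertex (DA A) i) (supportVertex (DA A) j) *
              (leafWeight A F (supportVertex (DA A) j))⁻¹ * A (supportVertex (DA A) j) j)
        else A i j * (leafWeight A F j)⁻¹
      else if j ∈ F then (leafWeight A F i)⁻¹ * A i j else 0 := by
  simp only [leafGroupInverse, leafProj, leafWeightInv, Matrix.sub_apply, Matrix.add_apply,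
    mul_diagonal, diagonal_mul]
  by_cases hi : i ∈ F <;> by_cases hj : j ∈ F
  · simp only [hi, hj, ↓reduceIte, one_mul, mul_zero, zero_mul, mul_one, add_zero, mul_apply,
      diagonal_apply, ite_mul, sum_ite_eq, mem_univ, mul_ite, sum_ite_eq', zero_sub, neg_inj]
    rw [sum_eq_single (supportVertex (DA A) j), if_neg (hF.supportVertex_notMem hj),
      sum_eq_single (supportVertex (DA A) i), if_neg (hF.supportVertex_notMem hi)]
    · intro k _ hk
      simp [hF.apply_eq_zero_of_ne_supportVertex hS hi hk]
    · simp
    · intro k _ hk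
      simp [hF.apply_eq_zero_of_ne_supportVertex' hS hj hk]
    · simp
  all_goals simp [hi, hj, mul_apply, diagonal_apply]

variable (hΔ : Delta A ≠ 0)
include hΔ

theorem mu_eq_of_mem_of_mem {i j : Fin n} (hi : i ∈ F) (hj : j ∈ F) :
    mu A i j = -(A i (supportVertex (DA A) i) * (leafWeight A F (supportVertex (DA A) i))⁻¹ *
      A (supportVertex (DA A) i) (supportVertex (DA A) j) *
        (leafWeight A F (supportVertex (DA A) j))⁻¹ * A (supportVertex (DA A) j) j) *
          Delta A := by
  have hu := hF.supportVertex_notMem hi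
  have hv := hF.supportVertex_notMem hj
  by_cases hadj : Adjd (DA A) (supportVertex (DA A) i) (supportVertex (DA A) j)
  · rw [hF.mu_eq_of_adjd hi hj hadj, hF.delta_eq_prod_sdiff_mul
      (insert_subset_iff.mpr ⟨mem_compl.mpr hu, singleton_subset_iff.mpr (mem_compl.mpr hv)⟩),
      prod_pair hadj.1]
    field_simp [hF.leafWeight_ne_zero hΔ hu, hF.leafWeight_ne_zero hΔ hv]
  · rw [mu_eq_zero_of_not_maxMatchable fun h => ?_,
      show A (supportVertex (DA A) i) (supportVertex (DA A) j) = 0 from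
        by_contra fun h => hadj (adjd_of_apply_ne_zero hS h)]
    · ring
    rcases hF.maxMatchable_cases h with ⟨-, rfl⟩ | ⟨-, rfl⟩ | ⟨-, -, h⟩
    exacts [hu hj, hv hi, hadj h]

theorem mu_eq_of_mem_of_notMem {i j : Fin n} (hi : i ∈ F) (hj : j ∉ F) :
    mu A i j = A i j * (leafWeight A F j)⁻¹ * Delta A := by
  by_cases hji : j = supportVertex (DA A) i
  · subst hji
    rw [hF.mu_eq_of_mk_eq hi Sym2.eq_swap,
      hF.delta_eq_prod_sdiff_mul (singleton_subset_iff.mpr (mem_compl.mpr hj)), prod_singleton]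
    field_simp [hF.leafWeight_ne_zero hΔ hj]
  · rw [mu_eq_zero_of_not_maxMatchable fun h => ?_,
      hF.apply_eq_zero_of_ne_supportVertex hS hi hji, zero_mul, zero_mul]
    rcases hF.maxMatchable_cases h with ⟨-, h⟩ | ⟨h, -⟩ | ⟨-, h, -⟩
    exacts [hji h, hj h, hj h]

theorem mu_eq_of_notMem_of_mem {i j : Fin n} (hi : i ∉ F) (hj : j ∈ F) :
    mu A i j = (leafWeight A F i)⁻¹ * A i j * Delta A := by
  by_cases hij : i = supportVertex (DA A) j
  · subst hij
    rw [hF.mu_eq_of_mk_eq hj rfl,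
      hF.delta_eq_prod_sdiff_mul (singleton_subset_iff.mpr (mem_compl.mpr hi)), prod_singleton]
    field_simp [hF.leafWeight_ne_zero hΔ hi]
  · rw [mu_eq_zero_of_not_maxMatchable fun h => ?_,
      hF.apply_eq_zero_of_ne_supportVertex' hS hj hij, mul_zero, zero_mul]
    rcases hF.maxMatchable_cases h with ⟨h, -⟩ | ⟨-, h⟩ | ⟨h, -⟩
    exacts [hi h, hij h, hi h]

theorem leafGroupInverse_apply_eq_mu_div (i j : Fin n) :
    leafGroupInverse A F i j = mu A i j / Delta A := by
  rw [hF.leafGroupInverse_apply hS, eq_div_iff hΔ]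
  split_ifs with hi hj hj
  · exact (hF.mu_eq_of_mem_of_mem hS hΔ hi hj).symm
  · exact (hF.mu_eq_of_mem_of_notMem hS hΔ hi hj).symm
  · exact (hF.mu_eq_of_notMem_of_mem hS hΔ hi hj).symm
  · rw [mu_eq_zero_of_not_maxMatchable fun h => ?_, zero_mul]
    rcases hF.maxMatchable_cases h with ⟨h, -⟩ | ⟨h, -⟩ | ⟨h, -⟩
    exacts [hi h, hj h, hi h]

end IsLeafSet

end GroupInverseMatrix

/-- Theorem (Nandi, Thm 1.3): if `D(A) ∈ 𝒟` is strongly connected and `Δ_A ≠ 0`, then the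
group inverse `A^#` exists and its entries are `α_{ij} = μ_{ij}/Δ_A`. -/
theorem group_inverse_entries_of_classD {n : ℕ} (A : Matrix (Fin n) (Fin n) ℝ)
    (hD : InClassD (DA A)) (hSC : StronglyConnected (DA A)) (hΔ : Delta A ≠ 0) :
    (∃ X, IsGroupInverse A X) ∧
      ∀ X, IsGroupInverse A X → ∀ i j, X i j = mu A i j / Delta A := by
  obtain ⟨F, hF⟩ := exists_isLeafSet hD hSC
  have hX := hF.isGroupInverse_leafGroupInverse hD.1 hΔ
  refine ⟨⟨_, hX⟩, fun X hX' i j => ?_⟩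
  rw [groupInverse_unique hX' hX, hF.leafGroupInverse_apply_eq_mu_div hD.1 hΔ]
end

section
/- Let A be an n×n real matrix such that D(A) belongs to the class 𝒟, D(A) is strongly connected, and Δ_A ≠ 0. Then D(A^#) belongs to 𝒟 if and only if D(A) is either a corona digraph or a star tree digraph. -/
open Matrix

open scoped Classical

/-! ### Uniqueness of the group inverse -/

theorem gi_unique {n : ℕ} {A X Y : Matrix (Fin n) (Fin n) ℝ}
    (hX : IsGroupInverse A X) (hY : IsGroupInverse A Y) : X = Y := by
  obtain ⟨hX1, hX2, hX3⟩ := hX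
  obtain ⟨hY1, hY2, hY3⟩ := hY
  have hXA2 : X * A * A = A := by
    calc X * A * A = A * X * A := by rw [hX3]
    _ = A := hX1
  have hA2Y : A * (A * Y) = A := by
    calc A * (A * Y) = A * (Y * A) := by rw [hY3]
    _ = A * Y * A := by rw [Matrix.mul_assoc]
    _ = A := hY1
  have hkey : X * A = A * Y := by
    calc X * A = X * (A * (A * Y)) := by rw [hA2Y]
    _ = X * A * A * Y := by rw [Matrix.mul_assoc, Matrix.mul_assoc]
    _ = A * Y := by rw [hXA2]
  calc X = X * A * X := hX2.symm
  _ = A * Y * X := by rw [hkey]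
  _ = Y * A * X := by rw [hY3]
  _ = Y * (A * X) := by rw [Matrix.mul_assoc]
  _ = Y * (X * A) := by rw [hX3]
  _ = Y * (A * Y) := by rw [hkey]
  _ = Y * A * Y := by rw [Matrix.mul_assoc]
  _ = Y := hY2

/-! ### Setup: pendant neighbour function, pendant sets, S, X0, Pm -/

/-- the unique neighbour of a pendant vertex (junk value otherwise) -/
noncomputable def nbr {n : ℕ} (A : Matrix (Fin n) (Fin n) ℝ) (i : Fin n) : Fin n :=
  if h : Pendant (DA A) i then h.choose else i

/-- the set of pendant vertices attached to `v` -/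
noncomputable def Pv {n : ℕ} (A : Matrix (Fin n) (Fin n) ℝ) (v : Fin n) : Finset (Fin n) :=
  Finset.univ.filter (fun p => Pendant (DA A) p ∧ nbr A p = v)

noncomputable def Sv {n : ℕ} (A : Matrix (Fin n) (Fin n) ℝ) (v : Fin n) : ℝ :=
  ∑ p ∈ Pv A v, A v p * A p v

/-- the candidate group inverse -/
noncomputable def X0 {n : ℕ} (A : Matrix (Fin n) (Fin n) ℝ) : Matrix (Fin n) (Fin n) ℝ :=
  fun i j =>
    if Pendant (DA A) i then
      if Pendant (DA A) j then
        -(A i (nbr A i) * A (nbr A i) (nbr A j) * A (nbr A j) j) /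
          (Sv A (nbr A i) * Sv A (nbr A j))
      else A i j / Sv A j
    else
      if Pendant (DA A) j then A i j / Sv A i else 0

/-- the projection `A * X0 = X0 * A` -/
noncomputable def Pm {n : ℕ} (A : Matrix (Fin n) (Fin n) ℝ) : Matrix (Fin n) (Fin n) ℝ :=
  fun i j =>
    if Pendant (DA A) i then
      if Pendant (DA A) j then A i (nbr A i) * A (nbr A i) j / Sv A (nbr A i) else 0
    else
      if Pendant (DA A) j then 0 else if i = j then (1 : ℝ) else 0

section Basic

variable {n : ℕ} {A : Matrix (Fin n) (Fin n) ℝ}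

lemma adjd_symm {G : Fin n → Fin n → Prop} {i j : Fin n} (h : Adjd G i j) : Adjd G j i :=
  ⟨h.1.symm, h.2.2, h.2.1⟩

lemma pend_adj_nbr {p : Fin n} (hp : Pendant (DA A) p) : Adjd (DA A) p (nbr A p) := by
  rw [nbr, dif_pos hp]; exact hp.choose_spec.1

lemma pend_eq_nbr {p j : Fin n} (hp : Pendant (DA A) p) (h : Adjd (DA A) p j) :
    j = nbr A p := by
  rw [nbr, dif_pos hp]; exact hp.choose_spec.2 j h

variable (hsym : ∀ i j, A i j ≠ 0 → A j i ≠ 0) (hdg : ∀ i, A i i = 0)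

include hsym hdg in
lemma row_supp {p j : Fin n} (hp : Pendant (DA A) p) : A p j ≠ 0 ↔ j = nbr A p := by
  constructor
  · intro h
    have hne : p ≠ j := by rintro rfl; exact h (hdg p)
    exact pend_eq_nbr hp ⟨hne, h, hsym _ _ h⟩
  · rintro rfl
    exact (pend_adj_nbr hp).2.1

include hsym hdg in
lemma col_supp {p j : Fin n} (hp : Pendant (DA A) p) : A j p ≠ 0 ↔ j = nbr A p := by
  constructor
  · intro h; exact (row_supp hsym hdg hp).1 (hsym _ _ h)
  · rintro rfl; exact (pend_adj_nbr hp).2.2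

lemma nbr_ne {p : Fin n} (hp : Pendant (DA A) p) : nbr A p ≠ p :=
  (pend_adj_nbr hp).1.symm

lemma mem_Pv {p v : Fin n} : p ∈ Pv A v ↔ Pendant (DA A) p ∧ nbr A p = v := by
  simp [Pv]

lemma Pv_entry_ne {p v : Fin n} (h : p ∈ Pv A v) : A v p ≠ 0 ∧ A p v ≠ 0 := by
  obtain ⟨hp, hn⟩ := mem_Pv.1 h
  have h1 := (pend_adj_nbr hp).2.1
  have h2 := (pend_adj_nbr hp).2.2
  rw [hn] at h1 h2
  exact ⟨h2, h1⟩

end Basic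

section Struct

variable {n : ℕ} {A : Matrix (Fin n) (Fin n) ℝ}
variable (hsym : ∀ i j, A i j ≠ 0 → A j i ≠ 0) (hdg : ∀ i, A i i = 0)

/-- every non-pendant vertex has a pendant attached (from class 𝒟) -/
lemma base_has_pend (hD : InClassD (DA A)) {v : Fin n} (hb : ¬ Pendant (DA A) v) :
    ∃ p, p ∈ Pv A v := by
  obtain ⟨p, hadj, hp⟩ := hD.2 v hb
  refine ⟨p, mem_Pv.2 ⟨hp, ?_⟩⟩
  exact (pend_eq_nbr hp (adjd_symm hadj)).symm

lemma exists_third (hn : 3 ≤ n) (p v : Fin n) : ∃ z : Fin n, z ≠ p ∧ z ≠ v := by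
  by_contra h
  push_neg at h
  have hsub : (Finset.univ : Finset (Fin n)) ⊆ {p, v} := by
    intro z _
    rcases Classical.em (z = p) with rfl | hz
    · simp
    · simp [h z hz]
  have := Finset.card_le_card hsub
  simp only [Finset.card_univ, Fintype.card_fin] at this
  have h2 : ({p, v} : Finset (Fin n)).card ≤ 2 := Finset.card_insert_le _ _ |>.trans (by simp)
  omega

include hsym hdg in
/-- for `n ≥ 3`, the neighbour of a pendant vertex is not pendant -/
lemma nbr_base (hn : 3 ≤ n) (hSC : StronglyConnected (DA A)) {p : Fin n}
    (hp : Pendant (DA A) p) : ¬ Pendant (DA A) (nbr A p) := by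
  intro hv
  set v := nbr A p with hvdef
  have hpv : p = nbr A v := pend_eq_nbr hv (adjd_symm (pend_adj_nbr hp))
  obtain ⟨z, hzp, hzv⟩ := exists_third hn p v
  have hreach : ∀ w, Relation.ReflTransGen (DA A) p w → w = p ∨ w = v := by
    intro w hw
    induction hw with
    | refl => exact Or.inl rfl
    | tail _ hbc ih =>
      rename_i b c _
      rcases ih with rfl | rfl
      · exact Or.inr ((row_supp hsym hdg hp).1 hbc)
      · left
        have := (row_supp hsym hdg hv).1 hbc
        rw [← hpv] at this
        exact this
  rcases hreach z (hSC p z) with rfl | rfl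
  · exact hzp rfl
  · exact hzv rfl

end Struct

section FromX

variable {n : ℕ} {A X : Matrix (Fin n) (Fin n) ℝ}
variable (hsym : ∀ i j, A i j ≠ 0 → A j i ≠ 0) (hdg : ∀ i, A i i = 0)
variable (hX : IsGroupInverse A X)

include hsym hdg hX in
/-- the base-base entries of any group inverse vanish (n ≥ 3) -/
lemma X_bb (hn : 3 ≤ n) (hSC : StronglyConnected (DA A)) {u v p q : Fin n}
    (hpu : p ∈ Pv A u) (hqv : q ∈ Pv A v) : X u v = 0 := by
  obtain ⟨hp, hup⟩ := mem_Pv.1 hpu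
  obtain ⟨hq, hvq⟩ := mem_Pv.1 hqv
  have hApu : A p u ≠ 0 := (Pv_entry_ne hpu).2
  have hAvq : A v q ≠ 0 := (Pv_entry_ne hqv).1
  have key : A p q = A p u * X u v * A v q := by
    have h1 : (A * X * A) p q = A p q := by rw [hX.1]
    rw [Matrix.mul_apply] at h1
    have h2 : ∀ l, l ∈ Finset.univ → l ≠ v → (A * X) p l * A l q = 0 := by
      intro l _ hl
      have : A l q = 0 := by
        by_contra hc
        exact hl ((col_supp hsym hdg hq).1 hc |>.trans hvq)
      rw [this, mul_zero]
    rw [Finset.sum_eq_single_of_mem v (Finset.mem_univ v) h2] at h1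
    rw [Matrix.mul_apply] at h1
    have h3 : ∀ k, k ∈ Finset.univ → k ≠ u → A p k * X k v = 0 := by
      intro k _ hk
      have : A p k = 0 := by
        by_contra hc
        exact hk ((row_supp hsym hdg hp).1 hc |>.trans hup)
      rw [this, zero_mul]
    rw [Finset.sum_eq_single_of_mem u (Finset.mem_univ u) h3] at h1
    exact h1.symm
  have hApq : A p q = 0 := by
    by_contra hc
    have hqu : q = nbr A p := (row_supp hsym hdg hp).1 hc
    rw [hup] at hqu
    have hbu : ¬ Pendant (DA A) u := hup ▸ nbr_base hsym hdg hn hSC hp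
    exact hbu (hqu ▸ hq)
  rw [hApq] at key
  have h0 : A p u * X u v * A v q = 0 := key.symm
  rcases mul_eq_zero.1 h0 with h | h
  · rcases mul_eq_zero.1 h with h' | h'
    · exact absurd h' hApu
    · exact h'
  · exact absurd h hAvq

end FromX

section Sne

variable {n : ℕ} {A X : Matrix (Fin n) (Fin n) ℝ}
variable (hsym : ∀ i j, A i j ≠ 0 → A j i ≠ 0) (hdg : ∀ i, A i i = 0)

lemma sum_Pv_eq {v : Fin n} {s : Finset (Fin n)} (hsub : Pv A v ⊆ s) {F : Fin n → ℝ} {c : ℝ}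
    (h0 : ∀ k ∈ s, k ∉ Pv A v → F k = 0)
    (h1 : ∀ k ∈ Pv A v, F k = c * (A v k * A k v)) :
    ∑ k ∈ s, F k = c * Sv A v := by
  rw [← Finset.sum_subset hsub h0, Finset.sum_congr rfl h1, Sv, Finset.mul_sum]

variable (hX : IsGroupInverse A X)

include hsym hdg hX in
lemma AX_vv (hn : 3 ≤ n) (hSC : StronglyConnected (DA A)) (hD : InClassD (DA A))
    {v : Fin n} (hb : ¬ Pendant (DA A) v) : (A * X) v v = 1 := by
  obtain ⟨q, hqv⟩ := base_has_pend hD hb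
  have hq : Pendant (DA A) q := (mem_Pv.1 hqv).1
  have hvq : nbr A q = v := (mem_Pv.1 hqv).2
  have hAvq : A v q ≠ 0 := (Pv_entry_ne hqv).1
  have h1 : (A * X * A) v q = A v q := by rw [hX.1]
  rw [Matrix.mul_apply] at h1
  have h2 : ∀ l, l ∈ Finset.univ → l ≠ v → (A * X) v l * A l q = 0 := by
    intro l _ hl
    have : A l q = 0 := by
      by_contra hc
      exact hl ((col_supp hsym hdg hq).1 hc |>.trans hvq)
    rw [this, mul_zero]
  rw [Finset.sum_eq_single_of_mem v (Finset.mem_univ v) h2] at h1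
  have := mul_right_cancel₀ hAvq (h1.trans (one_mul (A v q)).symm)
  exact this

include hsym hdg hX in
lemma X_pv {v p : Fin n} (hpv : p ∈ Pv A v) : X p v = A p v * (X * X) v v := by
  have hp : Pendant (DA A) p := (mem_Pv.1 hpv).1
  have hvp : nbr A p = v := (mem_Pv.1 hpv).2
  have h1 : X p v = (X * A * X) p v := by rw [hX.2.1]
  rw [Matrix.mul_apply] at h1
  have hXA : ∀ l, (X * A) p l = A p v * X v l := by
    intro l
    rw [← hX.2.2, Matrix.mul_apply]
    rw [Finset.sum_eq_single_of_mem v (Finset.mem_univ v)]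
    intro k _ hk
    have : A p k = 0 := by
      by_contra hc
      exact hk ((row_supp hsym hdg hp).1 hc |>.trans hvp)
    rw [this, zero_mul]
  calc X p v = ∑ l, (X * A) p l * X l v := h1
  _ = ∑ l, A p v * (X v l * X l v) := by
      apply Finset.sum_congr rfl
      intro l _
      rw [hXA l, mul_assoc]
  _ = A p v * ∑ l, X v l * X l v := by rw [← Finset.mul_sum]
  _ = A p v * (X * X) v v := by rw [Matrix.mul_apply]

include hsym hdg hX in
lemma Sv_mul (hn : 3 ≤ n) (hSC : StronglyConnected (DA A)) (hD : InClassD (DA A))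
    {v : Fin n} (hb : ¬ Pendant (DA A) v) : Sv A v * (X * X) v v = 1 := by
  have h1 : (A * X) v v = 1 := AX_vv hsym hdg hX hn hSC hD hb
  rw [Matrix.mul_apply] at h1
  obtain ⟨q, hqv⟩ := base_has_pend hD hb
  have hsum : ∑ k, A v k * X k v = (X * X) v v * Sv A v := by
    apply sum_Pv_eq (Finset.subset_univ _)
    · intro k _ hk
      by_cases hA : A v k = 0
      · rw [hA, zero_mul]
      · -- A v k ≠ 0 and k ∉ Pv A v: k cannot be pendant, so k is base; then X k v = 0
        have hknp : ¬ Pendant (DA A) k := by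
          intro hkp
          exact hk (mem_Pv.2 ⟨hkp, ((col_supp hsym hdg hkp).1 hA).symm⟩)
        obtain ⟨r, hrk⟩ := base_has_pend hD hknp
        rw [X_bb hsym hdg hX hn hSC hrk hqv, mul_zero]
    · intro k hkv
      rw [X_pv hsym hdg hX hkv]
      ring
  rw [hsum] at h1
  rw [mul_comm]
  exact h1

include hsym hdg hX in
lemma Sv_ne (hn : 3 ≤ n) (hSC : StronglyConnected (DA A)) (hD : InClassD (DA A))
    {v : Fin n} (hb : ¬ Pendant (DA A) v) : Sv A v ≠ 0 :=
  left_ne_zero_of_mul_eq_one (Sv_mul hsym hdg hX hn hSC hD hb)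

end Sne

section Entries

variable {n : ℕ} {A : Matrix (Fin n) (Fin n) ℝ}

lemma X0_bb' {i j : Fin n} (hi : ¬ Pendant (DA A) i) (hj : ¬ Pendant (DA A) j) :
    X0 A i j = 0 := by
  show (if Pendant (DA A) i then _ else _) = 0
  rw [if_neg hi, if_neg hj]

lemma X0_pb {i j : Fin n} (hi : Pendant (DA A) i) (hj : ¬ Pendant (DA A) j) :
    X0 A i j = A i j / Sv A j := by
  show (if Pendant (DA A) i then _ else _) = _
  rw [if_pos hi, if_neg hj]

lemma X0_bp {i j : Fin n} (hi : ¬ Pendant (DA A) i) (hj : Pendant (DA A) j) :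
    X0 A i j = A i j / Sv A i := by
  show (if Pendant (DA A) i then _ else _) = _
  rw [if_neg hi, if_pos hj]

lemma X0_pp {i j : Fin n} (hi : Pendant (DA A) i) (hj : Pendant (DA A) j) :
    X0 A i j = -(A i (nbr A i) * A (nbr A i) (nbr A j) * A (nbr A j) j) /
      (Sv A (nbr A i) * Sv A (nbr A j)) := by
  show (if Pendant (DA A) i then _ else _) = _
  rw [if_pos hi, if_pos hj]

lemma Pm_pp {i j : Fin n} (hi : Pendant (DA A) i) (hj : Pendant (DA A) j) :
    Pm A i j = A i (nbr A i) * A (nbr A i) j / Sv A (nbr A i) := by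
  show (if Pendant (DA A) i then _ else _) = _
  rw [if_pos hi, if_pos hj]

lemma Pm_pb {i j : Fin n} (hi : Pendant (DA A) i) (hj : ¬ Pendant (DA A) j) :
    Pm A i j = 0 := by
  show (if Pendant (DA A) i then _ else _) = _
  rw [if_pos hi, if_neg hj]

lemma Pm_bp {i j : Fin n} (hi : ¬ Pendant (DA A) i) (hj : Pendant (DA A) j) :
    Pm A i j = 0 := by
  show (if Pendant (DA A) i then _ else _) = _
  rw [if_neg hi, if_pos hj]

lemma Pm_bb {i j : Fin n} (hi : ¬ Pendant (DA A) i) (hj : ¬ Pendant (DA A) j) :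
    Pm A i j = if i = j then (1 : ℝ) else 0 := by
  show (if Pendant (DA A) i then _ else _) = _
  rw [if_neg hi, if_neg hj]

end Entries

section Products

variable {n : ℕ} {A : Matrix (Fin n) (Fin n) ℝ}
variable (hsym : ∀ i j, A i j ≠ 0 → A j i ≠ 0) (hdg : ∀ i, A i i = 0)
variable (hn : 3 ≤ n) (hSC : StronglyConnected (DA A)) (hD : InClassD (DA A))
variable (hS : ∀ v : Fin n, ¬ Pendant (DA A) v → Sv A v ≠ 0)

include hsym hdg hn hSC hD hS

lemma AX0_eq_Pm : A * X0 A = Pm A := by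
  ext i j
  rw [Matrix.mul_apply]
  by_cases hi : Pendant (DA A) i
  · -- pendant row: only k = nbr i contributes
    set v := nbr A i with hv
    have hvb : ¬ Pendant (DA A) v := nbr_base hsym hdg hn hSC hi
    rw [Finset.sum_eq_single_of_mem v (Finset.mem_univ v) (by
      intro k _ hk
      have : A i k = 0 := by
        by_contra hc
        exact hk ((row_supp hsym hdg hi).1 hc)
      rw [this, zero_mul])]
    by_cases hj : Pendant (DA A) j
    · rw [X0_bp hvb hj, Pm_pp hi hj, mul_div_assoc]
    · rw [X0_bb' hvb hj, Pm_pb hi hj, mul_zero]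
  · -- base row
    by_cases hj : Pendant (DA A) j
    · -- base-pendant target: sum is 0
      set u := nbr A j with hu
      have hub : ¬ Pendant (DA A) u := nbr_base hsym hdg hn hSC hj
      rw [Pm_bp hi hj]
      rw [← Finset.sum_filter_add_sum_filter_not Finset.univ (fun k => Pendant (DA A) k)]
      have hpend : ∑ k ∈ Finset.univ.filter (fun k => Pendant (DA A) k), A i k * X0 A k j
          = -(A i u * A u j) / (Sv A i * Sv A u) * Sv A i := by
        apply sum_Pv_eq
        · intro k hk
          simp only [Finset.mem_filter, Finset.mem_univ, true_and]
          exact (mem_Pv.1 hk).1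
        · intro k hk hknot
          simp only [Finset.mem_filter, Finset.mem_univ, true_and] at hk
          have : A i k = 0 := by
            by_contra hc
            exact hknot (mem_Pv.2 ⟨hk, ((col_supp hsym hdg hk).1 hc).symm⟩)
          rw [this, zero_mul]
        · intro k hk
          obtain ⟨hkp, hki⟩ := mem_Pv.1 hk
          rw [X0_pp hkp hj, hki, ← hu]
          ring
      have hbase : ∑ k ∈ Finset.univ.filter (fun k => ¬ Pendant (DA A) k), A i k * X0 A k j
          = A i u * (A u j / Sv A u) := by
        rw [Finset.sum_eq_single_of_mem u (by simp [hub]) (by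
          intro k hk hku
          simp only [Finset.mem_filter, Finset.mem_univ, true_and] at hk
          rw [X0_bp hk hj]
          have : A k j = 0 := by
            by_contra hc
            exact hku ((col_supp hsym hdg hj).1 hc)
          rw [this, zero_div, mul_zero])]
        rw [X0_bp hub hj]
      rw [hpend, hbase]
      have h1 := hS i hi
      have h2 := hS u hub
      field_simp
      ring
    · -- base-base target
      rw [Pm_bb hi hj]
      by_cases hij : i = j
      · subst hij
        rw [if_pos rfl]
        have : ∑ k, A i k * X0 A k i = (Sv A i)⁻¹ * Sv A i := by
          apply sum_Pv_eq (Finset.subset_univ _)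
          · intro k _ hknot
            by_cases hkp : Pendant (DA A) k
            · have : A i k = 0 := by
                by_contra hc
                exact hknot (mem_Pv.2 ⟨hkp, ((col_supp hsym hdg hkp).1 hc).symm⟩)
              rw [this, zero_mul]
            · rw [X0_bb' hkp hi, mul_zero]
          · intro k hk
            obtain ⟨hkp, hki⟩ := mem_Pv.1 hk
            rw [X0_pb hkp hi]
            field_simp
        rw [this, inv_mul_cancel₀ (hS i hi)]
      · rw [if_neg hij]
        apply Finset.sum_eq_zero
        intro k _
        by_cases hkp : Pendant (DA A) k
        · rw [X0_pb hkp hj]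
          by_cases hA : A i k = 0
          · rw [hA, zero_mul]
          · have hki : nbr A k = i := ((col_supp hsym hdg hkp).1 hA).symm
            have : A k j = 0 := by
              by_contra hc
              exact hij (hki ▸ (row_supp hsym hdg hkp).1 hc).symm
            rw [this, zero_div, mul_zero]
        · rw [X0_bb' hkp hj, mul_zero]

lemma X0A_eq_Pm : X0 A * A = Pm A := by
  ext i j
  rw [Matrix.mul_apply]
  by_cases hj : Pendant (DA A) j
  · -- pendant column: only k = nbr j contributes
    set u := nbr A j with hu
    have hub : ¬ Pendant (DA A) u := nbr_base hsym hdg hn hSC hj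
    rw [Finset.sum_eq_single_of_mem u (Finset.mem_univ u) (by
      intro k _ hk
      have : A k j = 0 := by
        by_contra hc
        exact hk ((col_supp hsym hdg hj).1 hc)
      rw [this, mul_zero])]
    by_cases hi : Pendant (DA A) i
    · rw [X0_pb hi hub, Pm_pp hi hj]
      by_cases hvu : nbr A i = u
      · rw [hvu]; ring
      · have h1 : A i u = 0 := by
          by_contra hc
          exact hvu ((row_supp hsym hdg hi).1 hc).symm
        have h2 : A (nbr A i) j = 0 := by
          by_contra hc
          exact hvu ((col_supp hsym hdg hj).1 hc)
        rw [h1, h2]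
        simp
    · rw [X0_bb' hi hub, Pm_bp hi hj, zero_mul]
  · by_cases hi : Pendant (DA A) i
    · -- pendant-base target: sum is 0
      set v := nbr A i with hv
      have hvb : ¬ Pendant (DA A) v := nbr_base hsym hdg hn hSC hi
      rw [Pm_pb hi hj]
      rw [← Finset.sum_filter_add_sum_filter_not Finset.univ (fun k => Pendant (DA A) k)]
      have hpend : ∑ k ∈ Finset.univ.filter (fun k => Pendant (DA A) k), X0 A i k * A k j
          = -(A i v * A v j) / (Sv A v * Sv A j) * Sv A j := by
        apply sum_Pv_eq
        · intro k hk
          simp only [Finset.mem_filter, Finset.mem_univ, true_and]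
          exact (mem_Pv.1 hk).1
        · intro k hk hknot
          simp only [Finset.mem_filter, Finset.mem_univ, true_and] at hk
          have : A k j = 0 := by
            by_contra hc
            exact hknot (mem_Pv.2 ⟨hk, ((row_supp hsym hdg hk).1 hc).symm⟩)
          rw [this, mul_zero]
        · intro k hk
          obtain ⟨hkp, hkj⟩ := mem_Pv.1 hk
          rw [X0_pp hi hkp, hkj, ← hv]
          ring
      have hbase : ∑ k ∈ Finset.univ.filter (fun k => ¬ Pendant (DA A) k), X0 A i k * A k j
          = A i v / Sv A v * A v j := by
        rw [Finset.sum_eq_single_of_mem v (by simp [hvb]) (by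
          intro k hk hkv
          simp only [Finset.mem_filter, Finset.mem_univ, true_and] at hk
          rw [X0_pb hi hk]
          have : A i k = 0 := by
            by_contra hc
            exact hkv ((row_supp hsym hdg hi).1 hc)
          rw [this, zero_div, zero_mul])]
        rw [X0_pb hi hvb]
      rw [hpend, hbase]
      have h1 := hS v hvb
      have h2 := hS j hj
      field_simp
      ring
    · -- base-base
      rw [Pm_bb hi hj]
      by_cases hij : i = j
      · subst hij
        rw [if_pos rfl]
        have : ∑ k, X0 A i k * A k i = (Sv A i)⁻¹ * Sv A i := by
          apply sum_Pv_eq (Finset.subset_univ _)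
          · intro k _ hknot
            by_cases hkp : Pendant (DA A) k
            · have : A i k = 0 := by
                by_contra hc
                exact hknot (mem_Pv.2 ⟨hkp, ((col_supp hsym hdg hkp).1 hc).symm⟩)
              rw [X0_bp hi hkp, this, zero_div, zero_mul]
            · rw [X0_bb' hi hkp, zero_mul]
          · intro k hk
            obtain ⟨hkp, hki⟩ := mem_Pv.1 hk
            rw [X0_bp hi hkp]
            ring
        rw [this, inv_mul_cancel₀ (hS i hi)]
      · rw [if_neg hij]
        apply Finset.sum_eq_zero
        intro k _
        by_cases hkp : Pendant (DA A) k
        · rw [X0_bp hi hkp]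
          by_cases hA : A i k = 0
          · rw [hA, zero_div, zero_mul]
          · have hki : nbr A k = i := ((col_supp hsym hdg hkp).1 hA).symm
            have : A k j = 0 := by
              by_contra hc
              exact hij (hki ▸ (row_supp hsym hdg hkp).1 hc).symm
            rw [this, mul_zero]
        · rw [X0_bb' hi hkp, zero_mul]

lemma PmA_eq : Pm A * A = A := by
  ext i j
  rw [Matrix.mul_apply]
  by_cases hi : Pendant (DA A) i
  · set v := nbr A i with hv
    have hvb : ¬ Pendant (DA A) v := nbr_base hsym hdg hn hSC hi
    rw [← Finset.sum_filter_add_sum_filter_not Finset.univ (fun k => Pendant (DA A) k)]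
    have hbase : ∑ k ∈ Finset.univ.filter (fun k => ¬ Pendant (DA A) k), Pm A i k * A k j
        = 0 := by
      apply Finset.sum_eq_zero
      intro k hk
      simp only [Finset.mem_filter, Finset.mem_univ, true_and] at hk
      rw [Pm_pb hi hk, zero_mul]
    by_cases hjv : j = v
    · have hjb : ¬ Pendant (DA A) j := hjv ▸ hvb
      have hpend : ∑ k ∈ Finset.univ.filter (fun k => Pendant (DA A) k), Pm A i k * A k j
          = A i j * (Sv A j)⁻¹ * Sv A j := by
        apply sum_Pv_eq
        · intro k hk
          simp only [Finset.mem_filter, Finset.mem_univ, true_and]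
          exact (mem_Pv.1 hk).1
        · intro k hk hknot
          simp only [Finset.mem_filter, Finset.mem_univ, true_and] at hk
          have hz : A j k = 0 := by
            by_contra hc
            exact hknot (mem_Pv.2 ⟨hk, ((col_supp hsym hdg hk).1 hc).symm⟩)
          rw [Pm_pp hi hk, ← hv, ← hjv, hz, mul_zero, zero_div, zero_mul]
        · intro k hk
          obtain ⟨hkp, hkj⟩ := mem_Pv.1 hk
          rw [Pm_pp hi hkp, ← hv, ← hjv]
          ring
      rw [hpend, hbase, add_zero, mul_assoc, inv_mul_cancel₀ (hS _ hjb), mul_one]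
    · have hAij : A i j = 0 := by
        by_contra hc
        exact hjv ((row_supp hsym hdg hi).1 hc)
      rw [hAij]
      have hpend : ∑ k ∈ Finset.univ.filter (fun k => Pendant (DA A) k), Pm A i k * A k j
          = 0 := by
        apply Finset.sum_eq_zero
        intro k hk
        simp only [Finset.mem_filter, Finset.mem_univ, true_and] at hk
        rw [Pm_pp hi hk, ← hv]
        by_cases hA : A v k = 0
        · rw [hA, mul_zero, zero_div, zero_mul]
        · have hkv : nbr A k = v := ((col_supp hsym hdg hk).1 hA).symm
          have : A k j = 0 := by
            by_contra hc
            exact hjv ((row_supp hsym hdg hk).1 hc |>.trans hkv)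
          rw [this, mul_zero]
      rw [hpend, hbase, add_zero]
  · rw [Finset.sum_eq_single_of_mem i (Finset.mem_univ i) (by
      intro k _ hk
      by_cases hkp : Pendant (DA A) k
      · rw [Pm_bp hi hkp, zero_mul]
      · rw [Pm_bb hi hkp, if_neg (fun h => hk h.symm), zero_mul])]
    rw [Pm_bb hi hi, if_pos rfl, one_mul]

lemma PmX0_eq : Pm A * X0 A = X0 A := by
  ext i j
  rw [Matrix.mul_apply]
  by_cases hi : Pendant (DA A) i
  · set v := nbr A i with hv
    have hvb : ¬ Pendant (DA A) v := nbr_base hsym hdg hn hSC hi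
    rw [← Finset.sum_filter_add_sum_filter_not Finset.univ (fun k => Pendant (DA A) k)]
    have hbase : ∑ k ∈ Finset.univ.filter (fun k => ¬ Pendant (DA A) k), Pm A i k * X0 A k j
        = 0 := by
      apply Finset.sum_eq_zero
      intro k hk
      simp only [Finset.mem_filter, Finset.mem_univ, true_and] at hk
      rw [Pm_pb hi hk, zero_mul]
    by_cases hj : Pendant (DA A) j
    · set u := nbr A j with hu
      have hub : ¬ Pendant (DA A) u := nbr_base hsym hdg hn hSC hj
      have hpend : ∑ k ∈ Finset.univ.filter (fun k => Pendant (DA A) k), Pm A i k * X0 A k j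
          = -(A i v * A v u * A u j) / (Sv A v * Sv A v * Sv A u) * Sv A v := by
        apply sum_Pv_eq
        · intro k hk
          simp only [Finset.mem_filter, Finset.mem_univ, true_and]
          exact (mem_Pv.1 hk).1
        · intro k hk hknot
          simp only [Finset.mem_filter, Finset.mem_univ, true_and] at hk
          have : A v k = 0 := by
            by_contra hc
            exact hknot (mem_Pv.2 ⟨hk, ((col_supp hsym hdg hk).1 hc).symm⟩)
          rw [Pm_pp hi hk, ← hv, this, mul_zero, zero_div, zero_mul]
        · intro k hk
          obtain ⟨hkp, hkv⟩ := mem_Pv.1 hk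
          rw [Pm_pp hi hkp, ← hv, X0_pp hkp hj, hkv, ← hu]
          ring
      rw [hpend, hbase, add_zero, X0_pp hi hj, ← hv, ← hu]
      have h1 := hS v hvb
      have h2 := hS u hub
      field_simp
    · by_cases hjv : j = v
      · have hjb : ¬ Pendant (DA A) j := hjv ▸ hvb
        have hpend : ∑ k ∈ Finset.univ.filter (fun k => Pendant (DA A) k), Pm A i k * X0 A k j
            = A i j / (Sv A j * Sv A j) * Sv A j := by
          apply sum_Pv_eq
          · intro k hk
            simp only [Finset.mem_filter, Finset.mem_univ, true_and]
            exact (mem_Pv.1 hk).1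
          · intro k hk hknot
            simp only [Finset.mem_filter, Finset.mem_univ, true_and] at hk
            have hz : A j k = 0 := by
              by_contra hc
              exact hknot (mem_Pv.2 ⟨hk, ((col_supp hsym hdg hk).1 hc).symm⟩)
            rw [Pm_pp hi hk, ← hv, ← hjv, hz, mul_zero, zero_div, zero_mul]
          · intro k hk
            obtain ⟨hkp, hkj⟩ := mem_Pv.1 hk
            rw [Pm_pp hi hkp, ← hv, ← hjv, X0_pb hkp hj]
            ring
        rw [hpend, hbase, add_zero, X0_pb hi hj]
        have h1 := hS _ hjb
        field_simp
      · have hAij : A i j = 0 := by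
          by_contra hc
          exact hjv ((row_supp hsym hdg hi).1 hc)
        rw [X0_pb hi hj, hAij, zero_div]
        have hpend : ∑ k ∈ Finset.univ.filter (fun k => Pendant (DA A) k), Pm A i k * X0 A k j
            = 0 := by
          apply Finset.sum_eq_zero
          intro k hk
          simp only [Finset.mem_filter, Finset.mem_univ, true_and] at hk
          rw [Pm_pp hi hk, ← hv, X0_pb hk hj]
          by_cases hA : A v k = 0
          · rw [hA, mul_zero, zero_div, zero_mul]
          · have hkv : nbr A k = v := ((col_supp hsym hdg hk).1 hA).symm
            have : A k j = 0 := by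
              by_contra hc
              exact hjv ((row_supp hsym hdg hk).1 hc |>.trans hkv)
            rw [this, zero_div, mul_zero]
        rw [hpend, hbase, add_zero]
  · rw [Finset.sum_eq_single_of_mem i (Finset.mem_univ i) (by
      intro k _ hk
      by_cases hkp : Pendant (DA A) k
      · rw [Pm_bp hi hkp, zero_mul]
      · rw [Pm_bb hi hkp, if_neg (fun h => hk h.symm), zero_mul])]
    rw [Pm_bb hi hi, if_pos rfl, one_mul]

lemma gi_X0 : IsGroupInverse A (X0 A) := by
  refine ⟨?_, ?_, ?_⟩
  · rw [AX0_eq_Pm hsym hdg hn hSC hD hS, PmA_eq hsym hdg hn hSC hD hS]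
  · rw [X0A_eq_Pm hsym hdg hn hSC hD hS, PmX0_eq hsym hdg hn hSC hD hS]
  · rw [AX0_eq_Pm hsym hdg hn hSC hD hS, X0A_eq_Pm hsym hdg hn hSC hD hS]

end Products

section Support

variable {n : ℕ} {A : Matrix (Fin n) (Fin n) ℝ}
variable (hsym : ∀ i j, A i j ≠ 0 → A j i ≠ 0) (hdg : ∀ i, A i i = 0)
variable (hn : 3 ≤ n) (hSC : StronglyConnected (DA A))
variable (hS : ∀ v : Fin n, ¬ Pendant (DA A) v → Sv A v ≠ 0)

include hdg in
lemma X0_diag (i : Fin n) : X0 A i i = 0 := by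
  by_cases hi : Pendant (DA A) i
  · rw [X0_pp hi hi, hdg (nbr A i)]
    simp
  · exact X0_bb' hi hi

include hsym hdg hn hSC hS in
lemma adjX0_bp {v j : Fin n} (hv : ¬ Pendant (DA A) v) :
    Adjd (DA (X0 A)) v j ↔ Pendant (DA A) j ∧ nbr A j = v := by
  constructor
  · rintro ⟨hne, h1, -⟩
    by_cases hj : Pendant (DA A) j
    · refine ⟨hj, ?_⟩
      rw [DA, X0_bp hv hj] at h1
      have : A v j ≠ 0 := by
        intro hz
        exact h1 (by rw [hz, zero_div])
      exact ((col_supp hsym hdg hj).1 this).symm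
    · exact absurd (X0_bb' hv hj) h1
  · rintro ⟨hj, hnb⟩
    have hAvj : A v j ≠ 0 := by
      have := (pend_adj_nbr hj).2.2
      rwa [hnb] at this
    have hAjv : A j v ≠ 0 := by
      have := (pend_adj_nbr hj).2.1
      rwa [hnb] at this
    refine ⟨fun h => hv (h ▸ hj), ?_, ?_⟩
    · show X0 A v j ≠ 0
      rw [X0_bp hv hj]
      exact div_ne_zero hAvj (hS v hv)
    · show X0 A j v ≠ 0
      rw [X0_pb hj hv]
      exact div_ne_zero hAjv (hS v hv)

include hsym hdg hn hSC hS in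
lemma adjX0_pp {i j : Fin n} (hi : Pendant (DA A) i) (hj : Pendant (DA A) j) :
    Adjd (DA (X0 A)) i j ↔ A (nbr A i) (nbr A j) ≠ 0 := by
  constructor
  · rintro ⟨hne, h1, -⟩
    rw [DA, X0_pp hi hj] at h1
    intro hz
    exact h1 (by rw [hz]; simp)
  · intro hAB
    have hvb : ¬ Pendant (DA A) (nbr A i) := nbr_base hsym hdg hn hSC hi
    have hub : ¬ Pendant (DA A) (nbr A j) := nbr_base hsym hdg hn hSC hj
    have hne : i ≠ j := by
      rintro rfl
      rw [hdg] at hAB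
      exact hAB rfl
    refine ⟨hne, ?_, ?_⟩
    · show X0 A i j ≠ 0
      rw [X0_pp hi hj]
      exact div_ne_zero (neg_ne_zero.2 (mul_ne_zero (mul_ne_zero (pend_adj_nbr hi).2.1 hAB)
        (pend_adj_nbr hj).2.2)) (mul_ne_zero (hS _ hvb) (hS _ hub))
    · show X0 A j i ≠ 0
      rw [X0_pp hj hi]
      exact div_ne_zero (neg_ne_zero.2 (mul_ne_zero (mul_ne_zero (pend_adj_nbr hj).2.1
        (hsym _ _ hAB)) (pend_adj_nbr hi).2.2)) (mul_ne_zero (hS _ hub) (hS _ hvb))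

include hsym hdg hn hSC hS in
lemma adjX0_pb {i j : Fin n} (hi : Pendant (DA A) i) (hj : ¬ Pendant (DA A) j) :
    Adjd (DA (X0 A)) i j ↔ j = nbr A i := by
  constructor
  · intro h
    exact ((adjX0_bp hsym hdg hn hSC hS hj).1 (adjd_symm h)).2.symm
  · intro h
    exact adjd_symm ((adjX0_bp hsym hdg hn hSC hS hj).2 ⟨hi, h.symm⟩)

end Support

section Graph

variable {n : ℕ} {A : Matrix (Fin n) (Fin n) ℝ}
variable (hsym : ∀ i j, A i j ≠ 0 → A j i ≠ 0) (hdg : ∀ i, A i i = 0)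
variable (hSC : StronglyConnected (DA A))

include hsym hdg hSC in
lemma reach_all {v : Fin n} (hnb : ∀ u, A v u ≠ 0 → Pendant (DA A) u) :
    ∀ z, z ≠ v → Pendant (DA A) z ∧ nbr A z = v := by
  have key : ∀ z, Relation.ReflTransGen (DA A) v z →
      z = v ∨ (Pendant (DA A) z ∧ nbr A z = v) := by
    intro z hz
    induction hz with
    | refl => exact Or.inl rfl
    | tail _ hbc ih =>
      rename_i b c _
      rcases ih with rfl | ⟨hbp, hbv⟩
      · have hc : Pendant (DA A) c := hnb c hbc
        exact Or.inr ⟨hc, ((col_supp hsym hdg hc).1 hbc).symm⟩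
      · left
        have := (row_supp hsym hdg hbp).1 hbc
        rw [hbv] at this
        exact this
  intro z hz
  rcases key z (hSC v z) with rfl | h
  · exact absurd rfl hz
  · exact h

include hsym hdg hSC in
lemma star_tree_of {v : Fin n} (hall : ∀ z, z ≠ v → Pendant (DA A) z ∧ nbr A z = v) :
    IsStarTree (DA A) := by
  have edge_touch : ∀ a b : Fin n, DA A a b → a = v ∨ b = v := by
    intro a b hab
    by_cases ha : a = v
    · exact Or.inl ha
    · obtain ⟨hap, hav⟩ := hall a ha
      right
      have := (row_supp hsym hdg hap).1 hab
      rw [hav] at this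
      exact this
  refine ⟨⟨hSC, ?_⟩, v, ?_, ?_⟩
  · intro a l hnodup hchain hlast
    match l with
    | [] =>
      exact absurd hlast (by simp only [List.getLast_singleton]; exact fun h => h (hdg a))
    | [b] => rfl
    | b :: c :: t =>
      exfalso
      have hGab : DA A a b := (List.chain_cons.1 hchain).1
      have hGbc : DA A b c := (List.chain_cons.1 (List.chain_cons.1 hchain).2).1
      have hab : a ≠ b := by
        intro h
        simp [h] at hnodup
      have hbc : b ≠ c := by
        intro h
        simp [h] at hnodup
      have hac : a ≠ c := by
        intro h
        simp [h] at hnodup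
      rcases edge_touch a b hGab with h1 | h1
      · -- a = v : edge (b,c) misses v
        rcases edge_touch b c hGbc with h2 | h2
        · exact hab (h1.trans h2.symm)
        · exact hac (h1.trans h2.symm)
      · -- b = v : the last edge (w, a) misses v
        set w := (a :: b :: c :: t).getLast (List.cons_ne_nil _ _) with hw
        have hwlast : w = (c :: t).getLast (List.cons_ne_nil _ _) := by
          rw [hw, List.getLast_cons (List.cons_ne_nil _ _), List.getLast_cons (List.cons_ne_nil _ _)]
        have hwmem : w ∈ c :: t := hwlast ▸ List.getLast_mem _
        have hbnotin : b ∉ c :: t := (List.nodup_cons.1 (List.Nodup.of_cons hnodup)).1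
        have hwb : w ≠ b := fun h => hbnotin (h ▸ hwmem)
        rcases edge_touch w a hlast with h2 | h2
        · exact hwb (h2.trans h1.symm)
        · exact hab (h2.trans h1.symm)
  · intro j hj
    obtain ⟨hjp, hjv⟩ := hall j hj
    have := pend_adj_nbr hjp
    rw [hjv] at this
    exact adjd_symm this
  · intro i j hij
    exact edge_touch i j hij.2.1

end Graph

section Main3

variable {n : ℕ} {A : Matrix (Fin n) (Fin n) ℝ}
variable (hsym : ∀ i j, A i j ≠ 0 → A j i ≠ 0) (hdg : ∀ i, A i i = 0)
variable (hn : 3 ≤ n) (hSC : StronglyConnected (DA A))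
variable (hS : ∀ v : Fin n, ¬ Pendant (DA A) v → Sv A v ≠ 0)

include hsym hdg in
lemma X0_ssd : IsSSD (DA (X0 A)) := by
  constructor
  · intro i
    show ¬ (X0 A i i ≠ 0)
    rw [X0_diag hdg i]
    simp
  · intro i j h
    show X0 A j i ≠ 0
    have h' : X0 A i j ≠ 0 := h
    by_cases hi : Pendant (DA A) i <;> by_cases hj : Pendant (DA A) j
    · rw [X0_pp hi hj] at h'
      obtain ⟨hnum, hden⟩ := div_ne_zero_iff.1 h'
      rw [neg_ne_zero] at hnum
      obtain ⟨h12, h3⟩ := mul_ne_zero_iff.1 hnum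
      obtain ⟨h1, h2⟩ := mul_ne_zero_iff.1 h12
      obtain ⟨hd1, hd2⟩ := mul_ne_zero_iff.1 hden
      rw [X0_pp hj hi]
      exact div_ne_zero (neg_ne_zero.2 (mul_ne_zero (mul_ne_zero (hsym _ _ h3) (hsym _ _ h2))
        (hsym _ _ h1))) (mul_ne_zero hd2 hd1)
    · rw [X0_pb hi hj] at h'
      obtain ⟨h1, h2⟩ := div_ne_zero_iff.1 h'
      rw [X0_bp hj hi]
      exact div_ne_zero (hsym _ _ h1) h2
    · rw [X0_bp hi hj] at h'
      obtain ⟨h1, h2⟩ := div_ne_zero_iff.1 h'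
      rw [X0_pb hj hi]
      exact div_ne_zero (hsym _ _ h1) h2
    · exact absurd (X0_bb' hi hj) h'

include hsym hdg hn hSC hS in
theorem main3 (hD : InClassD (DA A)) :
    InClassD (DA (X0 A)) ↔ IsCorona (DA A) ∨ IsStarTree (DA A) := by
  constructor
  · -- forward: contrapositive
    intro hCD
    by_contra hnot
    push_neg at hnot
    obtain ⟨hncor, hnstar⟩ := hnot
    -- get a base vertex v with two distinct attached pendants p ≠ q
    have hssdA : IsSSD (DA A) := hD.1
    have hex : ∃ v, ¬ Pendant (DA A) v ∧ ∃ p q, p ≠ q ∧ p ∈ Pv A v ∧ q ∈ Pv A v := by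
      rw [IsCorona] at hncor
      push_neg at hncor
      obtain ⟨v, hvb, hvnu⟩ := hncor hssdA
      obtain ⟨p, hpadj, hpp⟩ := hD.2 v hvb
      have hpPv : p ∈ Pv A v := mem_Pv.2 ⟨hpp, (pend_eq_nbr hpp (adjd_symm hpadj)).symm⟩
      have : ∃ q, (Adjd (DA A) v q ∧ Pendant (DA A) q) ∧ q ≠ p := by
        by_contra hq
        push_neg at hq
        exact hvnu ⟨p, ⟨hpadj, hpp⟩, fun y hy => hq y hy⟩
      obtain ⟨q, ⟨hqadj, hqp⟩, hqne⟩ := this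
      exact ⟨v, hvb, p, q, Ne.symm hqne,
        hpPv, mem_Pv.2 ⟨hqp, (pend_eq_nbr hqp (adjd_symm hqadj)).symm⟩⟩
    obtain ⟨v, hvb, p, q, hpq, hpPv, hqPv⟩ := hex
    -- v has a non-pendant neighbour u (else the graph is a star tree)
    have hu : ∃ u, A v u ≠ 0 ∧ ¬ Pendant (DA A) u := by
      by_contra hc
      push_neg at hc
      exact hnstar (star_tree_of hsym hdg hSC (reach_all hsym hdg hSC hc))
    obtain ⟨u, hAvu, hub⟩ := hu
    obtain ⟨w, hwPv⟩ := base_has_pend hD hub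
    have hwp : Pendant (DA A) w := (mem_Pv.1 hwPv).1
    have hwu : nbr A w = u := (mem_Pv.1 hwPv).2
    -- v is not pendant in D(X0)
    have hvnp : ¬ Pendant (DA (X0 A)) v := by
      rintro ⟨y, -, huniq⟩
      have h1 : p = y := huniq p ((adjX0_bp hsym hdg hn hSC hS hvb).2 (mem_Pv.1 hpPv))
      have h2 : q = y := huniq q ((adjX0_bp hsym hdg hn hSC hS hvb).2 (mem_Pv.1 hqPv))
      exact hpq (h1.trans h2.symm)
    obtain ⟨j, hjadj, hjpend⟩ := hCD.2 v hvnp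
    obtain ⟨hjp, hjv⟩ := (adjX0_bp hsym hdg hn hSC hS hvb).1 hjadj
    -- but j is adjacent in D(X0) to both v and w, so j is not pendant in D(X0)
    have hadj1 : Adjd (DA (X0 A)) j v := (adjX0_pb hsym hdg hn hSC hS hjp hvb).2 hjv.symm
    have hadj2 : Adjd (DA (X0 A)) j w := by
      apply (adjX0_pp hsym hdg hn hSC hS hjp hwp).2
      rw [hjv, hwu]
      exact hAvu
    obtain ⟨y, -, huniq⟩ := hjpend
    have h1 : v = y := huniq v hadj1
    have h2 : w = y := huniq w hadj2
    have : v ≠ w := fun h => hvb (h ▸ hwp)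
    exact this (h1.trans h2.symm)
  · -- backward
    rintro (hcor | hstar)
    · -- corona case
      refine ⟨X0_ssd hsym hdg, ?_⟩
      have hbase_pend : ∀ v, ¬ Pendant (DA A) v → Pendant (DA (X0 A)) v := by
        intro v hvb
        obtain ⟨p, hpPv⟩ := base_has_pend hD hvb
        obtain ⟨hpp, hpv⟩ := mem_Pv.1 hpPv
        obtain ⟨p', ⟨hp'adj, hp'p⟩, hp'uniq⟩ := hcor.2 v hvb
        refine ⟨p, (adjX0_bp hsym hdg hn hSC hS hvb).2 ⟨hpp, hpv⟩, ?_⟩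
        intro y hy
        obtain ⟨hyp, hyv⟩ := (adjX0_bp hsym hdg hn hSC hS hvb).1 hy
        have hyadj : Adjd (DA A) v y := by
          have := pend_adj_nbr hyp
          rw [hyv] at this
          exact adjd_symm this
        have hpadj : Adjd (DA A) v p := by
          have := pend_adj_nbr hpp
          rw [hpv] at this
          exact adjd_symm this
        rw [hp'uniq y ⟨hyadj, hyp⟩, hp'uniq p ⟨hpadj, hpp⟩]
      intro i hinp
      have hip : Pendant (DA A) i := by
        by_contra hib
        exact hinp (hbase_pend i hib)
      have hib : ¬ Pendant (DA A) (nbr A i) := nbr_base hsym hdg hn hSC hip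
      exact ⟨nbr A i, (adjX0_pb hsym hdg hn hSC hS hip hib).2 rfl, hbase_pend _ hib⟩
    · -- star tree case
      obtain ⟨htree, c, hcadj, honly⟩ := hstar
      obtain ⟨z, hz1, hz2⟩ := exists_third hn c c
      obtain ⟨z', hz'1, hz'2⟩ := exists_third hn z c
      have hallpend : ∀ j, j ≠ c → Pendant (DA A) j ∧ nbr A j = c := by
        intro j hj
        have hadjc : Adjd (DA A) j c := adjd_symm (hcadj j hj)
        have hjp : Pendant (DA A) j := by
          refine ⟨c, hadjc, ?_⟩
          intro y hy
          rcases honly j y hy with h | h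
          · exact absurd h hj
          · exact h
        exact ⟨hjp, (pend_eq_nbr hjp hadjc).symm⟩
      have hcb : ¬ Pendant (DA A) c := by
        rintro ⟨y, -, huniq⟩
        have h1 : z = y := huniq z (hcadj z hz1)
        have h2 : z' = y := huniq z' (hcadj z' hz'2)
        exact hz'1 (h2.trans h1.symm)
      refine ⟨X0_ssd hsym hdg, ?_⟩
      have hleafpend : ∀ j, j ≠ c → Pendant (DA (X0 A)) j := by
        intro j hj
        obtain ⟨hjp, hjc⟩ := hallpend j hj
        refine ⟨c, (adjX0_pb hsym hdg hn hSC hS hjp hcb).2 hjc.symm, ?_⟩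
        intro y hy
        by_cases hyp : Pendant (DA A) y
        · exfalso
          have hAcc := (adjX0_pp hsym hdg hn hSC hS hjp hyp).1 hy
          have hyc : y ≠ c := fun h => hcb (h ▸ hyp)
          rw [hjc, (hallpend y hyc).2] at hAcc
          exact hAcc (hdg c)
        · exact ((adjX0_pb hsym hdg hn hSC hS hjp hyp).1 hy).trans hjc
      intro i hinp
      have hic : i = c := by
        by_contra hicne
        exact hinp (hleafpend i hicne)
      subst hic
      refine ⟨z, ?_, hleafpend z hz1⟩
      exact (adjX0_bp hsym hdg hn hSC hS hcb).2 ⟨(hallpend z hz1).1, (hallpend z hz1).2⟩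

end Main3

/-- Theorem (Nandi, Thm 1.4): for `D(A) ∈ 𝒟` strongly connected with `Δ_A ≠ 0`, the digraph
of `A^#` is in `𝒟` iff `D(A)` is a corona digraph or a star tree digraph. -/
theorem classD_group_inverse_iff_corona_or_star {n : ℕ} (A : Matrix (Fin n) (Fin n) ℝ)
    (hD : InClassD (DA A)) (hSC : StronglyConnected (DA A)) (hΔ : Delta A ≠ 0) :
    ∀ X, IsGroupInverse A X →
      (InClassD (DA X) ↔ IsCorona (DA A) ∨ IsStarTree (DA A)) := by
  intro X hX
  have hsym : ∀ i j, A i j ≠ 0 → A j i ≠ 0 := fun i j h => hD.1.2 i j h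
  have hdg : ∀ i, A i i = 0 := fun i => not_not.1 (hD.1.1 i)
  rcases Nat.lt_or_ge n 3 with hlt | hge
  · interval_cases n
    · -- n = 0
      apply iff_of_true
      · exact ⟨⟨fun i => i.elim0, fun i => i.elim0⟩, fun i => i.elim0⟩
      · exact Or.inl ⟨hD.1, fun i => i.elim0⟩
    · -- n = 1
      exfalso
      have h0 : ¬ Pendant (DA A) 0 := by
        rintro ⟨j, hj, -⟩
        exact hj.1 (Subsingleton.elim _ _)
      obtain ⟨j, hadj, -⟩ := hD.2 0 h0
      exact hadj.1 (Subsingleton.elim _ _)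
    · -- n = 2
      have hA01 : A 0 1 ≠ 0 := by
        rcases (Relation.ReflTransGen.cases_head (hSC 0 1)) with heq | ⟨k, hk, -⟩
        · exact absurd heq (by decide)
        · fin_cases k
          · exact absurd (hdg 0) hk
          · exact hk
      have hA10 : A 1 0 ≠ 0 := hsym _ _ hA01
      set X2 : Matrix (Fin 2) (Fin 2) ℝ := fun i j => if i = j then 0 else (A j i)⁻¹ with hX2
      have hAX2 : A * X2 = 1 := by
        ext i j
        rw [Matrix.mul_apply, Fin.sum_univ_two]
        fin_cases i <;> fin_cases j <;>
          simp [hX2, hdg 0, hdg 1, Matrix.one_apply, hA01, hA10]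
      have hX2A : X2 * A = 1 := by
        ext i j
        rw [Matrix.mul_apply, Fin.sum_univ_two]
        fin_cases i <;> fin_cases j <;>
          simp [hX2, hdg 0, hdg 1, Matrix.one_apply, hA01, hA10]
      have hgi : IsGroupInverse A X2 :=
        ⟨by rw [hAX2, one_mul], by rw [hX2A, one_mul], hAX2.trans hX2A.symm⟩
      rw [gi_unique hX hgi]
      have hX201 : X2 0 1 ≠ 0 := by
        show (if (0 : Fin 2) = 1 then (0:ℝ) else (A 1 0)⁻¹) ≠ 0
        rw [if_neg (by decide)]
        exact inv_ne_zero hA10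
      have hX210 : X2 1 0 ≠ 0 := by
        show (if (1 : Fin 2) = 0 then (0:ℝ) else (A 0 1)⁻¹) ≠ 0
        rw [if_neg (by decide)]
        exact inv_ne_zero hA01
      have hpend : ∀ i : Fin 2, Pendant (DA X2) i := by
        intro i
        fin_cases i
        · exact ⟨1, ⟨by decide, hX201, hX210⟩, fun y hy => by
            fin_cases y
            · exact absurd rfl hy.1
            · rfl⟩
        · exact ⟨0, ⟨by decide, hX210, hX201⟩, fun y hy => by
            fin_cases y
            · rfl
            · exact absurd rfl hy.1⟩
      have hpendA : ∀ i : Fin 2, Pendant (DA A) i := by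
        intro i
        fin_cases i
        · exact ⟨1, ⟨by decide, hA01, hA10⟩, fun y hy => by
            fin_cases y
            · exact absurd rfl hy.1
            · rfl⟩
        · exact ⟨0, ⟨by decide, hA10, hA01⟩, fun y hy => by
            fin_cases y
            · rfl
            · exact absurd rfl hy.1⟩
      apply iff_of_true
      · refine ⟨⟨?_, ?_⟩, fun i hi => absurd (hpend i) hi⟩
        · intro i
          show ¬ (X2 i i ≠ 0)
          simp [hX2]
        · intro i j h
          show X2 j i ≠ 0
          fin_cases i <;> fin_cases j
          · exact absurd (show X2 0 0 = 0 by simp [hX2]) h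
          · exact hX210
          · exact hX201
          · exact absurd (show X2 1 1 = 0 by simp [hX2]) h
      · exact Or.inl ⟨hD.1, fun i hi => absurd (hpendA i) hi⟩
  · -- n ≥ 3
    have hS : ∀ v : Fin n, ¬ Pendant (DA A) v → Sv A v ≠ 0 :=
      fun v hv => Sv_ne hsym hdg hX hge hSC hD hv
    have hgi : IsGroupInverse A (X0 A) := gi_X0 hsym hdg hge hSC hD hS
    rw [gi_unique hX hgi]
    exact main3 hsym hdg hge hSC hS hD
end
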